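/- arXiv:2010.09691 — 12 statements merged into one kernel-verified Lean document; each statement's English description precedes it below -/
import Mathlib

section
/- Let A be an n×n symmetric positive definite real matrix, b a vector in ℝⁿ, and let H₀, W₀ be n×n symmetric positive definite matrices. Define the probabilistic linear solver iteration: x₀ = H₀b, r₀ = Ax₀ − b, and for i ≥ 1: sᵢ = −H_{i−1} r_{i−1}, yᵢ = A sᵢ, αᵢ = −(sᵢᵀ r_{i−1})/(sᵢᵀ yᵢ), xᵢ = x_{i−1} + αᵢ sᵢ, rᵢ = r_{i−1} + αᵢ yᵢ, and Hᵢ = H₀ + Δᵢ Uᵢᵀ + Uᵢ Δᵢᵀ − Uᵢ Yᵢᵀ Δᵢ Uᵢᵀ, where Sᵢ = [s₁,…,sᵢ] ∈ ℝ^{n×i}, Yᵢ = [y₁,…,yᵢ] = A Sᵢ, Δᵢ = Sᵢ − H₀Yᵢ, and Uᵢ = W₀Yᵢ (YᵢᵀW₀Yᵢ)⁻¹. Suppose that for all 1 ≤ i ≤ k the iteration is well defined (sᵢ ≠ 0 and YᵢᵀW₀Yᵢ is invertible). Then the actions are A-conjugate: sᵢᵀ A sⱼ = 0 for all 1 ≤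 i, j ≤ k with i ≠ j. -/
/-!
Two facts about the symmetric-Kronecker update drive the proof: `Uᵢᵀ Yᵢ = I`, and `Yᵢᵀ Δᵢ` is
symmetric because `Yᵢ = A Sᵢ` with `A` and `H₀` symmetric. Together they make `Hᵢ` symmetric and give
the secant condition `Hᵢ Yᵢ = Sᵢ`, i.e. `Hᵢ A sⱼ = sⱼ` for `j ≤ i`. Then
`sᵢ₊₁ᵀ A sⱼ = -rᵢᵀ Hᵢ A sⱼ = -rᵢᵀ sⱼ`, and induction on `i` shows at once that `rᵢ` is orthogonal to
`s₁, …, sᵢ` (the exact line search handles `sᵢ`, conjugacy the earlier actions) and that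
`s₁, …, sᵢ` are `A`-conjugate, as in the conjugate gradient method.
-/

open Matrix

section SymmKronecker

variable {R m n : Type*} [CommRing R] [Fintype n]

def symmKroneckerMean [Fintype m] (H₀ : Matrix n n R) (Δ U Y : Matrix n m R) : Matrix n n R :=
  H₀ + Δ * Uᵀ + U * Δᵀ - U * Yᵀ * Δ * Uᵀ

theorem isSymm_transpose_mul_sub_mul_mul {A H₀ : Matrix n n R} (hA : A.IsSymm) (hH₀ : H₀.IsSymm)
    (S : Matrix n m R) : ((A * S)ᵀ * (S - H₀ * (A * S))).IsSymm := by
  simp only [IsSymm, transpose_mul, transpose_sub, transpose_transpose, hA.eq, hH₀.eq,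
    Matrix.mul_sub, Matrix.mul_assoc]

theorem mul_nonsing_inv_transpose_mul_eq_one [Fintype m] [DecidableEq m] {W : Matrix n n R}
    (hW : W.IsSymm) {Y : Matrix n m R} (hY : IsUnit (Yᵀ * W * Y).det) :
    (W * Y * (Yᵀ * W * Y)⁻¹)ᵀ * Y = 1 := by
  have hG : (Yᵀ * W * Y).IsSymm := by
    simp only [IsSymm, transpose_mul, transpose_transpose, hW.eq, Matrix.mul_assoc]
  rw [transpose_mul, transpose_nonsing_inv, hG.eq, transpose_mul, hW.eq, Matrix.mul_assoc,
    nonsing_inv_mul _ hY]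

variable [Fintype m] {H₀ : Matrix n n R} {Δ U Y : Matrix n m R}

theorem symmKroneckerMean_mul [DecidableEq m] (hU : Uᵀ * Y = 1) (hΔ : (Yᵀ * Δ).IsSymm) :
    symmKroneckerMean H₀ Δ U Y * Y = H₀ * Y + Δ := by
  have hΔ' : Δᵀ * Y = Yᵀ * Δ := by simpa [IsSymm, transpose_mul] using hΔ
  simp only [symmKroneckerMean, Matrix.sub_mul, Matrix.add_mul, Matrix.mul_assoc, hU, hΔ',
    Matrix.mul_one]
  abel

theorem isSymm_symmKroneckerMean (hH₀ : H₀.IsSymm) (hΔ : (Yᵀ * Δ).IsSymm) :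
    (symmKroneckerMean H₀ Δ U Y).IsSymm := by
  have hΔ' : Δᵀ * Y = Yᵀ * Δ := by simpa [IsSymm, transpose_mul] using hΔ
  simp only [symmKroneckerMean, IsSymm, transpose_add, transpose_sub, transpose_mul,
    transpose_transpose, hH₀.eq, Matrix.mul_assoc]
  rw [← Matrix.mul_assoc Δᵀ, hΔ', Matrix.mul_assoc]
  abel

end SymmKronecker

section ConjugateDirections

variable {K n : Type*} [Field K] [Fintype n]

theorem dotProduct_add_div_smul_mulVec_eq_zero (A : Matrix n n K) {s : n → K} (r : n → K)
    (hs : s ⬝ᵥ A *ᵥ s ≠ 0) :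
    s ⬝ᵥ (r + (-(s ⬝ᵥ r) / (s ⬝ᵥ A *ᵥ s)) • A *ᵥ s) = 0 := by
  rw [dotProduct_add, dotProduct_smul, smul_eq_mul, div_mul_cancel₀ _ hs, add_neg_cancel]

theorem neg_mulVec_dotProduct_mulVec_eq {H A : Matrix n n K} (hH : H.IsSymm) {t : n → K}
    (hHt : H *ᵥ A *ᵥ t = t) (r : n → K) : -(H *ᵥ r) ⬝ᵥ A *ᵥ t = -(r ⬝ᵥ t) := by
  rw [neg_dotProduct, dotProduct_comm, ← dotProduct_transpose_mulVec, hH.eq, hHt]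

variable {k : ℕ} {A : Matrix n n K} {H : ℕ → Matrix n n K} {s r : ℕ → n → K} {α : ℕ → K}

theorem dotProduct_residual_eq_zero_and_conjugate_of_secant (hA : A.IsSymm)
    (hs : ∀ i, s (i + 1) = -(H i *ᵥ r i))
    (hr : ∀ i, r (i + 1) = r i + α (i + 1) • A *ᵥ s (i + 1))
    (hα : ∀ i, α (i + 1) = -(s (i + 1) ⬝ᵥ r i) / (s (i + 1) ⬝ᵥ A *ᵥ s (i + 1)))
    (hcurv : ∀ i, 1 ≤ i → i ≤ k → s i ⬝ᵥ A *ᵥ s i ≠ 0)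
    (hH : ∀ i, (H (i + 1)).IsSymm)
    (hsecant : ∀ i j, 1 ≤ j → j ≤ i → i < k → H i *ᵥ A *ᵥ s j = s j) :
    ∀ i ≤ k, (∀ j, 1 ≤ j → j ≤ i → s j ⬝ᵥ r i = 0) ∧
      ∀ j l, 1 ≤ j → j < l → l ≤ i → s j ⬝ᵥ A *ᵥ s l = 0 := by
  intro i
  induction i with
  | zero => exact fun _ => ⟨fun j hj hj0 => by omega, fun j l hj hjl hl0 => by omega⟩
  | succ i ih =>
    intro hik
    obtain ⟨horth, hconj⟩ := ih (by omega)
    have hnew : ∀ j, 1 ≤ j → j ≤ i → s j ⬝ᵥ A *ᵥ s (i + 1) = 0 := by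
      intro j hj hji
      obtain ⟨i, rfl⟩ := Nat.exists_eq_add_of_le' (hj.trans hji)
      rw [← dotProduct_transpose_mulVec, hA.eq, hs,
        neg_mulVec_dotProduct_mulVec_eq (hH i) (hsecant _ j hj hji (by omega)),
        dotProduct_comm, horth j hj hji, neg_zero]
    refine ⟨fun j hj hji => ?_, fun j l hj hjl hli => ?_⟩
    · rcases (Nat.le_succ_iff.mp hji) with hji | rfl
      · rw [hr, dotProduct_add, dotProduct_smul, horth j hj hji, hnew j hj hji, smul_zero,
          add_zero]
      · rw [hr, hα]
        exact dotProduct_add_div_smul_mulVec_eq_zero A _ (hcurv _ hj hik)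
    · rcases (Nat.le_succ_iff.mp hli) with hli | rfl
      · exact hconj j l hj hjl hli
      · exact hnew j hj (by omega)

theorem conjugate_of_secant (hA : A.IsSymm)
    (hs : ∀ i, s (i + 1) = -(H i *ᵥ r i))
    (hr : ∀ i, r (i + 1) = r i + α (i + 1) • A *ᵥ s (i + 1))
    (hα : ∀ i, α (i + 1) = -(s (i + 1) ⬝ᵥ r i) / (s (i + 1) ⬝ᵥ A *ᵥ s (i + 1)))
    (hcurv : ∀ i, 1 ≤ i → i ≤ k → s i ⬝ᵥ A *ᵥ s i ≠ 0)
    (hH : ∀ i, (H (i + 1)).IsSymm)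
    (hsecant : ∀ i j, 1 ≤ j → j ≤ i → i < k → H i *ᵥ A *ᵥ s j = s j)
    {i j : ℕ} (hi : 1 ≤ i) (hik : i ≤ k) (hj : 1 ≤ j) (hjk : j ≤ k) (hij : i ≠ j) :
    s i ⬝ᵥ A *ᵥ s j = 0 := by
  have hconj :=
    (dotProduct_residual_eq_zero_and_conjugate_of_secant hA hs hr hα hcurv hH hsecant k le_rfl).2
  rcases hij.lt_or_gt with hij | hji
  · exact hconj i j hi hij hjk
  · rw [← dotProduct_transpose_mulVec, hA.eq]
    exact hconj j i hj hji hik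

end ConjugateDirections

theorem stmt_0_general
    {n k : ℕ} (A : Matrix (Fin n) (Fin n) ℝ) (hA : A.PosDef)
    (H₀ W₀ : Matrix (Fin n) (Fin n) ℝ) (hH₀ : H₀.PosDef) (hW₀ : W₀.PosDef)
    (r s y : ℕ → Fin n → ℝ) (α : ℕ → ℝ)
    (H : ℕ → Matrix (Fin n) (Fin n) ℝ)
    (S Y Δ U : (i : ℕ) → Matrix (Fin n) (Fin i) ℝ)
    (hS : ∀ i (j : Fin n) (l : Fin i), S i j l = s (l.val + 1) j)
    (hY : ∀ i, Y i = A * S i)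
    (hΔ : ∀ i, Δ i = S i - H₀ * Y i)
    (hU : ∀ i, U i = W₀ * Y i * ((Y i)ᵀ * W₀ * Y i)⁻¹)
    (hs : ∀ i, s (i + 1) = -(H i).mulVec (r i))
    (hy : ∀ i, y (i + 1) = A.mulVec (s (i + 1)))
    (hα : ∀ i, α (i + 1) = -(s (i + 1) ⬝ᵥ r i) / (s (i + 1) ⬝ᵥ y (i + 1)))
    (hr : ∀ i, r (i + 1) = r i + α (i + 1) • y (i + 1))
    (hH : ∀ i, H (i + 1) = H₀ + Δ (i + 1) * (U (i + 1))ᵀ + U (i + 1) * (Δ (i + 1))ᵀ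
      - U (i + 1) * (Y (i + 1))ᵀ * Δ (i + 1) * (U (i + 1))ᵀ)
    (h_wd : ∀ i, 1 ≤ i → i ≤ k → s i ≠ 0 ∧ IsUnit ((Y i)ᵀ * W₀ * Y i).det) :
    ∀ i j, 1 ≤ i → i ≤ k → 1 ≤ j → j ≤ k → i ≠ j →
      s i ⬝ᵥ A.mulVec (s j) = 0 := by
  have hAs : A.IsSymm := hA.isHermitian
  have hH₀s : H₀.IsSymm := hH₀.isHermitian
  have hW₀s : W₀.IsSymm := hW₀.isHermitian
  have hΔs : ∀ i, ((Y i)ᵀ * Δ i).IsSymm := fun i => by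
    rw [hΔ, hY]
    exact isSymm_transpose_mul_sub_mul_mul hAs hH₀s (S i)
  have hsecant : ∀ i j, 1 ≤ j → j ≤ i → i < k → H i *ᵥ A *ᵥ s j = s j := by
    intro i j hj hji hik
    obtain ⟨i, rfl⟩ := Nat.exists_eq_add_of_le' (hj.trans hji)
    obtain ⟨j, rfl⟩ := Nat.exists_eq_add_of_le' hj
    have hUY : (U (i + 1))ᵀ * Y (i + 1) = 1 := by
      rw [hU]
      exact mul_nonsing_inv_transpose_mul_eq_one hW₀s (h_wd _ (by omega) hik.le).2
    have hHY : H (i + 1) * Y (i + 1) = S (i + 1) := by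
      rw [hH]
      exact (symmKroneckerMean_mul hUY (hΔs _)).trans (by rw [hΔ, add_sub_cancel])
    have hcol : (S (i + 1)).col ⟨j, by omega⟩ = s (j + 1) := funext fun a => hS _ a _
    rw [← hcol, ← mulVec_single_one, mulVec_mulVec, mulVec_mulVec, Matrix.mul_assoc, ← hY, hHY]
  refine fun i j => conjugate_of_secant hAs hs (fun i => hy i ▸ hr i) (fun i => hy i ▸ hα i)
    (fun i hi hik => ?_) (fun i => hH i ▸ isSymm_symmKroneckerMean hH₀s (hΔs _)) hsecant
  obtain ⟨i, rfl⟩ := Nat.exists_eq_add_of_le' hi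
  exact (hA.dotProduct_mulVec_pos (h_wd _ hi hik).1).ne'

/-- The actions of the probabilistic linear solver are `A`-conjugate. -/
theorem stmt_0
    {n k : ℕ} (A : Matrix (Fin n) (Fin n) ℝ) (hA : A.PosDef)
    (b : Fin n → ℝ)
    (H₀ W₀ : Matrix (Fin n) (Fin n) ℝ) (hH₀ : H₀.PosDef) (hW₀ : W₀.PosDef)
    (x r s y : ℕ → Fin n → ℝ) (α : ℕ → ℝ)
    (H : ℕ → Matrix (Fin n) (Fin n) ℝ)
    (S Y Δ U : (i : ℕ) → Matrix (Fin n) (Fin i) ℝ)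
    (hS : ∀ i (j : Fin n) (l : Fin i), S i j l = s (l.val + 1) j)
    (hY : ∀ i, Y i = A * S i)
    (hΔ : ∀ i, Δ i = S i - H₀ * Y i)
    (hU : ∀ i, U i = W₀ * Y i * ((Y i)ᵀ * W₀ * Y i)⁻¹)
    (hx0 : x 0 = H₀.mulVec b)
    (hr0 : r 0 = A.mulVec (x 0) - b)
    (hH0 : H 0 = H₀)
    (hs : ∀ i, s (i + 1) = -(H i).mulVec (r i))
    (hy : ∀ i, y (i + 1) = A.mulVec (s (i + 1)))
    (hα : ∀ i, α (i + 1) = -(s (i + 1) ⬝ᵥ r i) / (s (i + 1) ⬝ᵥ y (i + 1)))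
    (hx : ∀ i, x (i + 1) = x i + α (i + 1) • s (i + 1))
    (hr : ∀ i, r (i + 1) = r i + α (i + 1) • y (i + 1))
    (hH : ∀ i, H (i + 1) = H₀ + Δ (i + 1) * (U (i + 1))ᵀ + U (i + 1) * (Δ (i + 1))ᵀ
      - U (i + 1) * (Y (i + 1))ᵀ * Δ (i + 1) * (U (i + 1))ᵀ)
    (h_wd : ∀ i, 1 ≤ i → i ≤ k → s i ≠ 0 ∧ IsUnit ((Y i)ᵀ * W₀ * Y i).det) :
    ∀ i j, 1 ≤ i → i ≤ k → 1 ≤ j → j ≤ k → i ≠ j →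
      s i ⬝ᵥ A.mulVec (s j) = 0 :=
  stmt_0_general A hA H₀ W₀ hH₀ hW₀ r s y α H S Y Δ U hS hY hΔ hU hs hy hα hr hH h_wd
end

section
/- Let A be an n×n symmetric positive definite real matrix and b ∈ ℝⁿ. Fix α > 0 and set A₀ = αI, H₀ = α⁻¹I. Let the probabilistic linear solver iteration be defined as: x₀ = H₀b, r₀ = Ax₀ − b, and for i ≥ 1: sᵢ = −H_{i−1}r_{i−1}, yᵢ = Asᵢ, αᵢ = −(sᵢᵀr_{i−1})/(sᵢᵀyᵢ), xᵢ = x_{i−1} + αᵢsᵢ, rᵢ = r_{i−1} + αᵢyᵢ, Hᵢ = H₀ + Δᵢ Uᵢᵀ + Uᵢ Δᵢᵀ − Uᵢ Yᵢᵀ Δᵢ Uᵢᵀ with Δᵢ = Sᵢ − H₀Yᵢ, Uᵢ = W₀^H Yᵢ(Yᵢᵀ W₀^H Yᵢ)⁻¹, where Sᵢ, Yᵢ collect the first i actions and observations. Assume the inverse-model covariance factor W₀^H is symmetric positive definite and, together with a symmetric matrix W₀^A, satisfies W₀^A Sᵢ = Yᵢ and Sᵢᵀ(W₀^A A₀⁻¹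 − A W₀^H) = 0 for all i ≤ k, and that the iteration is well defined (sᵢ ≠ 0, Yᵢᵀ W₀^H Yᵢ invertible) up to step k. Let (xᵢ^{CG}) be the conjugate gradient iterates for Ax = b started at x₀^{CG} = x₀: r₀^{CG} = Ax₀ − b, d₁ = −r₀^{CG}, and for i ≥ 1: αᵢ^{CG} = −(dᵢᵀ r_{i−1}^{CG})/(dᵢᵀ A dᵢ), xᵢ^{CG} = x_{i−1}^{CG} + αᵢ^{CG} dᵢ, rᵢ^{CG} = A xᵢ^{CG} − b, d_{i+1} = −rᵢ^{CG} + ((rᵢ^{CG})ᵀ rᵢ^{CG} / (r_{i−1}^{CG})ᵀ r_{i−1}^{CG}) dᵢ. Then xᵢ = xᵢ^{CG} for all 0 ≤ i ≤ k. -/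
/-!
The compatibility conditions force `W₀ᴴ Y = a⁻¹ Y` for `Y = A S`, so the gain
`U = W₀ᴴ Y (Yᵀ W₀ᴴ Y)⁻¹` has its range inside that of `Y`, and the posterior mean sends the
residual `rᵢ` into `ℝ rᵢ + range Y`. The transposed secant equation `Yᵀ Hᵢ = Sᵀ`, together with
`Sᵀ rᵢ = 0`, makes the action `sᵢ₊₁ = -Hᵢ rᵢ` orthogonal to `range Y`. By the orthogonality and
conjugacy relations of conjugate gradients, the CG direction `dᵢ₊₁` has the same two properties,
and a nonzero vector of `ℝ rᵢ + range Y` orthogonal to `range Y` is determined up to scale.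
Exact line search along collinear directions takes the same step, so by induction the residuals,
the directions up to scale, and the iterates all agree.
-/

open Matrix

variable {ι κ : Type*}

lemma Matrix.PosDef.isSymm {A : Matrix ι ι ℝ} (hA : A.PosDef) : A.IsSymm :=
  isHermitian_iff_isSymm.mp hA.isHermitian

lemma Matrix.col_mem_range_mulVecLin [DecidableEq κ] [Fintype κ] (M : Matrix ι κ ℝ) (t : κ) :
    M.col t ∈ LinearMap.range M.mulVecLin :=
  ⟨Pi.single t 1, mulVec_single_one M t⟩

variable [Fintype ι]

lemma Matrix.PosDef.dotProduct_mulVec_self_pos {A : Matrix ι ι ℝ} (hA : A.PosDef) {p : ι → ℝ}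
    (hp : p ≠ 0) : 0 < p ⬝ᵥ A *ᵥ p := by
  simpa using hA.dotProduct_mulVec_pos hp

lemma Matrix.IsSymm.dotProduct_mulVec_comm {A : Matrix ι ι ℝ} (hA : A.IsSymm) (u v : ι → ℝ) :
    u ⬝ᵥ A *ᵥ v = v ⬝ᵥ A *ᵥ u := by
  rw [dotProduct_mulVec, ← mulVec_transpose, hA.eq, dotProduct_comm]

lemma Matrix.col_mul (A : Matrix ι ι ℝ) [DecidableEq κ] [Fintype κ] (S : Matrix ι κ ℝ) (t : κ) :
    (A * S).col t = A *ᵥ S.col t := by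
  rw [← mulVec_single_one, ← mulVec_mulVec, mulVec_single_one]

lemma Matrix.transpose_mulVec_eq_zero_of_col_dotProduct [Fintype κ] {M : Matrix ι κ ℝ} {z : ι → ℝ}
    (h : ∀ t, M.col t ⬝ᵥ z = 0) : Mᵀ *ᵥ z = 0 :=
  funext h

noncomputable def lineSearchStep (A : Matrix ι ι ℝ) (p r : ι → ℝ) : ℝ :=
  -(p ⬝ᵥ r) / (p ⬝ᵥ A *ᵥ p)

lemma dotProduct_add_lineSearchStep_smul {A : Matrix ι ι ℝ} (hA : A.PosDef) (p r : ι → ℝ) :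
    p ⬝ᵥ (r + lineSearchStep A p r • A *ᵥ p) = 0 := by
  rcases eq_or_ne p 0 with rfl | hp
  · simp
  · have := (hA.dotProduct_mulVec_self_pos hp).ne'
    rw [dotProduct_add, dotProduct_smul, smul_eq_mul, lineSearchStep]
    field_simp
    ring

lemma lineSearchStep_smul_smul (A : Matrix ι ι ℝ) (p r : ι → ℝ) {c : ℝ} (hc : c ≠ 0) :
    lineSearchStep A (c • p) r • (c • p) = lineSearchStep A p r • p := by
  simp only [lineSearchStep, smul_dotProduct, mulVec_smul, dotProduct_smul, smul_eq_mul, smul_smul]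
  congr 1
  rcases eq_or_ne (p ⬝ᵥ A *ᵥ p) 0 with h | h
  · simp [h]
  · field_simp

lemma eq_zero_of_mem_range_of_transpose_mulVec_eq_zero [Fintype κ] {Y : Matrix ι κ ℝ}
    {z : ι → ℝ} (hz : z ∈ LinearMap.range Y.mulVecLin) (hYz : Yᵀ *ᵥ z = 0) : z = 0 := by
  obtain ⟨u, rfl⟩ := hz
  rw [← dotProduct_self_eq_zero]
  calc Y.mulVecLin u ⬝ᵥ Y *ᵥ u = (Yᵀ *ᵥ Y.mulVecLin u) ⬝ᵥ u := by
        rw [dotProduct_mulVec, mulVec_transpose]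
    _ = 0 := by rw [hYz, zero_dotProduct]

lemma exists_eq_smul_of_mem_sup_range [Fintype κ] {Y : Matrix ι κ ℝ} {r z p : ι → ℝ}
    (hz : z ∈ ℝ ∙ r ⊔ LinearMap.range Y.mulVecLin) (hp : p ∈ ℝ ∙ r ⊔ LinearMap.range Y.mulVecLin)
    (hYz : Yᵀ *ᵥ z = 0) (hYp : Yᵀ *ᵥ p = 0) (hp0 : p ≠ 0) : ∃ c : ℝ, z = c • p := by
  obtain ⟨_, hμ, w, hw, rfl⟩ := Submodule.mem_sup.mp hz
  obtain ⟨μ, rfl⟩ := Submodule.mem_span_singleton.mp hμ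
  obtain ⟨_, hν, v, hv, rfl⟩ := Submodule.mem_sup.mp hp
  obtain ⟨ν, rfl⟩ := Submodule.mem_span_singleton.mp hν
  have hν0 : ν ≠ 0 := by
    rintro rfl
    rw [zero_smul, zero_add] at hYp hp0
    exact hp0 (eq_zero_of_mem_range_of_transpose_mulVec_eq_zero hv hYp)
  have hcomb : ν • (μ • r + w) - μ • (ν • r + v) = 0 := by
    apply eq_zero_of_mem_range_of_transpose_mulVec_eq_zero (Y := Y)
    · convert (LinearMap.range Y.mulVecLin).sub_mem (Submodule.smul_mem _ ν hw)
        (Submodule.smul_mem _ μ hv) using 1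
      module
    · simp only [mulVec_sub, mulVec_smul, hYz, hYp, smul_zero, sub_zero]
  refine ⟨μ / ν, ?_⟩
  rw [sub_eq_zero] at hcomb
  rw [div_eq_inv_mul, mul_smul, ← hcomb, smul_smul, inv_mul_cancel₀ hν0, one_smul]

structure IsCGRun (A : Matrix ι ι ℝ) (r d : ℕ → ι → ℝ) (α : ℕ → ℝ) : Prop where
  d_one : d 1 = -r 0
  α_succ : ∀ i, α (i + 1) = lineSearchStep A (d (i + 1)) (r i)
  r_succ : ∀ i, r (i + 1) = r i + α (i + 1) • A *ᵥ d (i + 1)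
  d_succ : ∀ i, d (i + 2) = -r (i + 1) + (r (i + 1) ⬝ᵥ r (i + 1) / (r i ⬝ᵥ r i)) • d (i + 1)

namespace IsCGRun

variable {A : Matrix ι ι ℝ} {r d : ℕ → ι → ℝ} {α : ℕ → ℝ}

lemma d_dotProduct_r_self (cg : IsCGRun A r d α) (hA : A.PosDef) (l : ℕ) :
    d (l + 1) ⬝ᵥ r (l + 1) = 0 := by
  rw [cg.r_succ, cg.α_succ]
  exact dotProduct_add_lineSearchStep_smul hA _ _

lemma d_succ_dotProduct_r (cg : IsCGRun A r d α) (hA : A.PosDef) (l : ℕ) :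
    d (l + 1) ⬝ᵥ r l = -(r l ⬝ᵥ r l) := by
  cases l with
  | zero => rw [cg.d_one, neg_dotProduct]
  | succ l =>
    rw [cg.d_succ, add_dotProduct, smul_dotProduct, cg.d_dotProduct_r_self hA, neg_dotProduct,
      smul_zero, add_zero]

lemma d_ne_zero (cg : IsCGRun A r d α) (hA : A.PosDef) {l : ℕ} (hr : r l ≠ 0) : d (l + 1) ≠ 0 := by
  intro hd
  have h := cg.d_succ_dotProduct_r hA l
  rw [hd, zero_dotProduct, eq_comm, neg_eq_zero, dotProduct_self_eq_zero] at h
  exact hr h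

lemma α_ne_zero (cg : IsCGRun A r d α) (hA : A.PosDef) {l : ℕ} (hr : r l ≠ 0) : α (l + 1) ≠ 0 := by
  rw [cg.α_succ, lineSearchStep, cg.d_succ_dotProduct_r hA, neg_neg]
  exact div_ne_zero (mt dotProduct_self_eq_zero.mp hr)
    (hA.dotProduct_mulVec_self_pos (cg.d_ne_zero hA hr)).ne'

lemma mulVec_d (cg : IsCGRun A r d α) (hA : A.PosDef) {l : ℕ} (hr : r l ≠ 0) :
    A *ᵥ d (l + 1) = (α (l + 1))⁻¹ • (r (l + 1) - r l) := by
  rw [cg.r_succ, add_sub_cancel_left, smul_smul, inv_mul_cancel₀ (cg.α_ne_zero hA hr), one_smul]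

lemma r_dotProduct_r (cg : IsCGRun A r d α) {m : ℕ} (horth : ∀ j < m, d (j + 1) ⬝ᵥ r m = 0) :
    ∀ l < m, r l ⬝ᵥ r m = 0
  | 0, hm => by rw [← neg_neg (r 0), ← cg.d_one, neg_dotProduct, horth 0 hm, neg_zero]
  | l + 1, hl => by
    have hr : r (l + 1) = (r (l + 1) ⬝ᵥ r (l + 1) / (r l ⬝ᵥ r l)) • d (l + 1) - d (l + 2) := by
      rw [cg.d_succ]; abel
    rw [hr, sub_dotProduct, smul_dotProduct, horth l (by omega), horth (l + 1) hl, smul_zero,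
      sub_zero]

lemma orthogonal_succ (cg : IsCGRun A r d α) (hA : A.PosDef) {m : ℕ}
    (horth : ∀ j < m, d (j + 1) ⬝ᵥ r m = 0) (hconj : ∀ j < m, d (m + 1) ⬝ᵥ A *ᵥ d (j + 1) = 0) :
    ∀ j < m + 1, d (j + 1) ⬝ᵥ r (m + 1) = 0 := by
  intro j hj
  rcases Nat.lt_succ_iff_lt_or_eq.mp hj with hj | rfl
  · rw [cg.r_succ, dotProduct_add, dotProduct_smul, horth j hj,
      hA.isSymm.dotProduct_mulVec_comm, hconj j hj, smul_zero, add_zero]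
  · exact cg.d_dotProduct_r_self hA j

lemma conjugate_succ (cg : IsCGRun A r d α) (hA : A.PosDef) {m : ℕ} (hr : ∀ l ≤ m, r l ≠ 0)
    (horth : ∀ j < m + 1, d (j + 1) ⬝ᵥ r (m + 1) = 0)
    (hconj : ∀ j < m, d (m + 1) ⬝ᵥ A *ᵥ d (j + 1) = 0) :
    ∀ j < m + 1, d (m + 2) ⬝ᵥ A *ᵥ d (j + 1) = 0 := by
  have hrr := cg.r_dotProduct_r horth
  intro j hj
  rw [cg.d_succ, add_dotProduct, smul_dotProduct, neg_dotProduct, cg.mulVec_d hA (hr j (by omega)),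
    dotProduct_smul, dotProduct_sub, dotProduct_comm (r (m + 1)) (r (j + 1)),
    dotProduct_comm (r (m + 1)) (r j), hrr j hj]
  rcases Nat.lt_succ_iff_lt_or_eq.mp hj with hj | rfl
  · rw [hrr (j + 1) (by omega), ← cg.mulVec_d hA (hr j (by omega)), hconj j hj]
    simp
  · rw [dotProduct_smul, dotProduct_sub, cg.d_dotProduct_r_self hA, cg.d_succ_dotProduct_r hA]
    have := mt dotProduct_self_eq_zero.mp (hr j le_rfl)
    simp only [smul_eq_mul]
    field_simp
    ring

theorem orthogonal_conjugate (cg : IsCGRun A r d α) (hA : A.PosDef) :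
    ∀ m, (∀ l < m, r l ≠ 0) →
      (∀ j < m, d (j + 1) ⬝ᵥ r m = 0) ∧ ∀ j < m, d (m + 1) ⬝ᵥ A *ᵥ d (j + 1) = 0
  | 0, _ => ⟨fun _ h => absurd h (Nat.not_lt_zero _), fun _ h => absurd h (Nat.not_lt_zero _)⟩
  | m + 1, hr => by
    obtain ⟨horth, hconj⟩ := orthogonal_conjugate cg hA m fun l hl => hr l (by omega)
    have horth' := cg.orthogonal_succ hA horth hconj
    exact ⟨horth', cg.conjugate_succ hA (fun l hl => hr l (by omega)) horth' hconj⟩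

lemma d_mem_span (cg : IsCGRun A r d α) : ∀ l, d (l + 1) ∈ Submodule.span ℝ (r '' Set.Iic l)
  | 0 => by
    rw [cg.d_one]
    exact Submodule.neg_mem _ (Submodule.subset_span (Set.mem_image_of_mem r Set.self_mem_Iic))
  | l + 1 => by
    rw [cg.d_succ]
    refine Submodule.add_mem _
      (Submodule.neg_mem _ (Submodule.subset_span (Set.mem_image_of_mem r Set.self_mem_Iic)))
      (Submodule.smul_mem _ _ ?_)
    exact Submodule.span_mono (Set.image_mono (Set.Iic_subset_Iic.mpr l.le_succ)) (d_mem_span cg l)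

end IsCGRun

section PosteriorMean

variable [Fintype κ] [DecidableEq κ]

noncomputable def posteriorMean (H₀ W : Matrix ι ι ℝ) (S Y : Matrix ι κ ℝ) : Matrix ι ι ℝ :=
  let Δ := S - H₀ * Y
  let U := W * Y * (Yᵀ * W * Y)⁻¹
  H₀ + Δ * Uᵀ + U * Δᵀ - U * Yᵀ * Δ * Uᵀ

lemma transpose_mul_posteriorMean {H₀ W : Matrix ι ι ℝ} (hH₀ : H₀ᵀ = H₀) {S Y : Matrix ι κ ℝ}
    (hY : IsUnit (Yᵀ * W * Y).det) : Yᵀ * posteriorMean H₀ W S Y = Sᵀ := by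
  have hYU : Yᵀ * (W * Y * (Yᵀ * W * Y)⁻¹) = 1 := by
    rw [← Matrix.mul_assoc, ← Matrix.mul_assoc, mul_nonsing_inv _ hY]
  simp only [posteriorMean, Matrix.mul_add, Matrix.mul_sub, ← Matrix.mul_assoc, hYU,
    Matrix.one_mul, transpose_sub, transpose_mul, hH₀]
  abel

lemma posteriorMean_mulVec_mem {H₀ W : Matrix ι ι ℝ} {S Y : Matrix ι κ ℝ} {r : ι → ℝ}
    {M : Submodule ℝ (ι → ℝ)} (hH₀ : H₀ *ᵥ r ∈ M) (hΔ : ∀ v, (S - H₀ * Y) *ᵥ v ∈ M)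
    (hWY : ∀ v, (W * Y) *ᵥ v ∈ M) : posteriorMean H₀ W S Y *ᵥ r ∈ M := by
  set Δ := S - H₀ * Y
  set U := W * Y * (Yᵀ * W * Y)⁻¹
  have hU : ∀ v, U *ᵥ v ∈ M := fun v => by
    rw [← mulVec_mulVec]
    exact hWY _
  have h : posteriorMean H₀ W S Y *ᵥ r
      = H₀ *ᵥ r + Δ *ᵥ (Uᵀ *ᵥ r) + U *ᵥ (Δᵀ *ᵥ r) - U *ᵥ ((Yᵀ * Δ * Uᵀ) *ᵥ r) := by
    simp only [posteriorMean, add_mulVec, sub_mulVec, mulVec_mulVec, Matrix.mul_assoc, Δ, U]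
  rw [h]
  exact M.sub_mem (M.add_mem (M.add_mem hH₀ (hΔ _)) (hU _)) (hU _)

end PosteriorMean

lemma mul_eq_inv_smul_of_compatible {A W Wa : Matrix ι ι ℝ} [DecidableEq ι] [Fintype κ]
    {S : Matrix ι κ ℝ} {a : ℝ} (ha : a ≠ 0) (hA : A.IsSymm) (hW : W.IsSymm) (hWa : Wa.IsSymm)
    (hWaS : Wa * S = A * S) (h : Sᵀ * (Wa * (a • 1 : Matrix ι ι ℝ)⁻¹ - A * W) = 0) :
    W * (A * S) = a⁻¹ • (A * S) := by
  have hinv : (a • 1 : Matrix ι ι ℝ)⁻¹ = a⁻¹ • 1 :=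
    inv_eq_right_inv (by rw [smul_mul_smul_comm, mul_inv_cancel₀ ha, one_mul, one_smul])
  rw [hinv, Matrix.mul_sub, sub_eq_zero, Matrix.mul_smul, Matrix.mul_one] at h
  have h' := congrArg transpose h
  rw [transpose_mul, transpose_mul, transpose_smul, transpose_mul, hWa.eq, hW.eq, hA.eq,
    transpose_transpose, Matrix.smul_mul, hWaS, Matrix.mul_assoc] at h'
  exact h'.symm

structure IsPLSRun (A H₀ W : Matrix ι ι ℝ) (r s : ℕ → ι → ℝ) (α : ℕ → ℝ)
    (S : (i : ℕ) → Matrix ι (Fin i) ℝ) : Prop where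
  col_S : ∀ i (t : Fin i), (S i).col t = s (t + 1)
  s_one : s 1 = -(H₀ *ᵥ r 0)
  s_succ : ∀ i, s (i + 2) = -(posteriorMean H₀ W (S (i + 1)) (A * S (i + 1)) *ᵥ r (i + 1))
  α_succ : ∀ i, α (i + 1) = lineSearchStep A (s (i + 1)) (r i)
  r_succ : ∀ i, r (i + 1) = r i + α (i + 1) • A *ᵥ s (i + 1)

namespace IsPLSRun

variable {A H₀ W : Matrix ι ι ℝ} {r s : ℕ → ι → ℝ} {α : ℕ → ℝ}
  {S : (i : ℕ) → Matrix ι (Fin i) ℝ}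

lemma r_ne_zero (pls : IsPLSRun A H₀ W r s α S) {l : ℕ} (hs : s (l + 1) ≠ 0) : r l ≠ 0 := by
  rintro hr
  apply hs
  cases l with
  | zero => rw [pls.s_one, hr, mulVec_zero, neg_zero]
  | succ l => rw [pls.s_succ, hr, mulVec_zero, neg_zero]

lemma col_mul_S (pls : IsPLSRun A H₀ W r s α S) {i : ℕ} (t : Fin i) :
    (A * S i).col t = A *ᵥ s (t + 1) := by
  rw [col_mul, pls.col_S]

lemma r_mem_sup (pls : IsPLSRun A H₀ W r s α S) {l i : ℕ} (hl : l ≤ i) :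
    r l ∈ ℝ ∙ r i ⊔ LinearMap.range (A * S i).mulVecLin := by
  have hsub : ∀ j, l ≤ j → j ≤ i → r l - r j ∈ LinearMap.range (A * S i).mulVecLin := by
    intro j hlj
    induction j, hlj using Nat.le_induction with
    | base => intro; rw [sub_self]; exact zero_mem _
    | succ j _ ih =>
      intro hj
      have hy := col_mem_range_mulVecLin (A * S i) ⟨j, hj⟩
      rw [pls.col_mul_S] at hy
      rw [pls.r_succ, ← sub_sub]
      exact sub_mem (ih (by omega)) (Submodule.smul_mem _ _ hy)
  have h := Submodule.add_mem_sup (Submodule.mem_span_singleton_self (r i)) (hsub i hl le_rfl)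
  rwa [add_sub_cancel] at h

lemma s_succ_succ_mem [DecidableEq ι] (pls : IsPLSRun A H₀ W r s α S) {c : ℝ}
    (hH₀ : H₀ = c • 1) {m : ℕ} (hWY : W * (A * S (m + 1)) = c • (A * S (m + 1)))
    {M : Submodule ℝ (ι → ℝ)} (hr : r (m + 1) ∈ M) (hS : ∀ v, S (m + 1) *ᵥ v ∈ M)
    (hY : ∀ v, (A * S (m + 1)) *ᵥ v ∈ M) :
    s (m + 2) ∈ M := by
  rw [pls.s_succ]
  refine M.neg_mem (posteriorMean_mulVec_mem ?_ (fun v => ?_) (fun v => ?_))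
  · rw [hH₀, smul_mulVec, one_mulVec]
    exact M.smul_mem c hr
  · rw [hH₀, Matrix.smul_mul, Matrix.one_mul, sub_mulVec, smul_mulVec]
    exact M.sub_mem (hS v) (M.smul_mem c (hY v))
  · rw [hWY, smul_mulVec]
    exact M.smul_mem c (hY v)

lemma transpose_mulVec_s_succ_succ (pls : IsPLSRun A H₀ W r s α S) (hH₀ : H₀ᵀ = H₀) {m : ℕ}
    (hdet : IsUnit ((A * S (m + 1))ᵀ * W * (A * S (m + 1))).det)
    (horth : ∀ t : Fin (m + 1), s (t + 1) ⬝ᵥ r (m + 1) = 0) :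
    (A * S (m + 1))ᵀ *ᵥ s (m + 2) = 0 := by
  rw [pls.s_succ, mulVec_neg, mulVec_mulVec, transpose_mul_posteriorMean hH₀ hdet, neg_eq_zero]
  exact transpose_mulVec_eq_zero_of_col_dotProduct fun t => by rw [pls.col_S]; exact horth t

variable {r' d : ℕ → ι → ℝ} {α' : ℕ → ℝ}

lemma exists_s_succ_succ_eq_smul [DecidableEq ι] (hA : A.PosDef)
    (pls : IsPLSRun A H₀ W r s α S) (cg : IsCGRun A r' d α') {c : ℝ} (hH₀ : H₀ = c • 1) {m : ℕ}
    (hWY : W * (A * S (m + 1)) = c • (A * S (m + 1)))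
    (hdet : IsUnit ((A * S (m + 1))ᵀ * W * (A * S (m + 1))).det)
    (hr : ∀ l ≤ m + 1, r l = r' l) (hne : ∀ l ≤ m + 1, r' l ≠ 0)
    (hsd : ∀ j < m + 1, ∃ γ : ℝ, s (j + 1) = γ • d (j + 1)) :
    ∃ γ : ℝ, s (m + 2) = γ • d (m + 2) := by
  choose γ hγ using hsd
  obtain ⟨horth, hconj⟩ := cg.orthogonal_conjugate hA (m + 1) fun l hl => hne l hl.le
  set M := ℝ ∙ r (m + 1) ⊔ LinearMap.range (A * S (m + 1)).mulVecLin
  have hdM : ∀ j ≤ m + 1, d (j + 1) ∈ M := by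
    refine fun j hj => Submodule.span_le.mpr ?_ (cg.d_mem_span j)
    rintro _ ⟨l, hl, rfl⟩
    rw [← hr l (hl.trans hj)]
    exact pls.r_mem_sup (hl.trans hj)
  have hSM : LinearMap.range (S (m + 1)).mulVecLin ≤ M := by
    rw [range_mulVecLin, Submodule.span_le]
    rintro _ ⟨t, rfl⟩
    rw [pls.col_S, hγ t t.isLt]
    exact M.smul_mem _ (hdM t t.isLt.le)
  have hs_mem : s (m + 2) ∈ M :=
    pls.s_succ_succ_mem hH₀ hWY (Submodule.mem_sup_left (Submodule.mem_span_singleton_self _))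
      (fun v => hSM ⟨v, rfl⟩) (fun v => Submodule.mem_sup_right ⟨v, rfl⟩)
  have hs_orth := pls.transpose_mulVec_s_succ_succ (by rw [hH₀, transpose_smul, transpose_one])
    hdet fun t => by rw [hγ t t.isLt, smul_dotProduct, hr (m + 1) le_rfl, horth t t.isLt, smul_zero]
  have hd_orth : (A * S (m + 1))ᵀ *ᵥ d (m + 2) = 0 :=
    transpose_mulVec_eq_zero_of_col_dotProduct fun t => by
      rw [pls.col_mul_S, hγ t t.isLt, mulVec_smul, smul_dotProduct, dotProduct_comm,
        hconj t t.isLt, smul_zero]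
  exact exists_eq_smul_of_mem_sup_range hs_mem (hdM (m + 1) le_rfl) hs_orth hd_orth
    (cg.d_ne_zero hA (hne (m + 1) le_rfl))

lemma step_eq_of_s_eq_smul (pls : IsPLSRun A H₀ W r s α S) (cg : IsCGRun A r' d α') {l : ℕ}
    (hr : r l = r' l) (hs0 : s (l + 1) ≠ 0) {γ : ℝ} (hs : s (l + 1) = γ • d (l + 1)) :
    α (l + 1) • s (l + 1) = α' (l + 1) • d (l + 1) := by
  have hγ : γ ≠ 0 := by
    rintro rfl
    exact hs0 (by rw [hs, zero_smul])
  rw [pls.α_succ, cg.α_succ, hs, hr, lineSearchStep_smul_smul _ _ _ hγ]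

lemma r_succ_eq_of_s_eq_smul (pls : IsPLSRun A H₀ W r s α S) (cg : IsCGRun A r' d α') {l : ℕ}
    (hr : r l = r' l) (hs0 : s (l + 1) ≠ 0) {γ : ℝ} (hs : s (l + 1) = γ • d (l + 1)) :
    r (l + 1) = r' (l + 1) := by
  rw [pls.r_succ, cg.r_succ, ← mulVec_smul, ← mulVec_smul, pls.step_eq_of_s_eq_smul cg hr hs0 hs,
    hr]

theorem step_eq_of_isCGRun [DecidableEq ι] (hA : A.PosDef) (pls : IsPLSRun A H₀ W r s α S)
    (cg : IsCGRun A r' d α') (hr₀ : r 0 = r' 0) {c : ℝ} (hH₀ : H₀ = c • 1) {k : ℕ}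
    (hWY : ∀ m < k, W * (A * S (m + 1)) = c • (A * S (m + 1)))
    (hdet : ∀ m < k, IsUnit ((A * S (m + 1))ᵀ * W * (A * S (m + 1))).det)
    (hs : ∀ i < k, s (i + 1) ≠ 0) :
    ∀ i < k, α (i + 1) • s (i + 1) = α' (i + 1) • d (i + 1) := by
  suffices h : ∀ i ≤ k, (∀ l ≤ i, r l = r' l) ∧ ∀ j < i, ∃ γ : ℝ, s (j + 1) = γ • d (j + 1) by
    intro i hi
    obtain ⟨hr, hsd⟩ := h (i + 1) hi
    obtain ⟨γ, hγ⟩ := hsd i i.lt_succ_self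
    exact pls.step_eq_of_s_eq_smul cg (hr i i.le_succ) (hs i hi) hγ
  intro i
  induction i with
  | zero =>
    exact fun _ => ⟨fun l hl => by rwa [Nat.le_zero.mp hl], fun j hj => absurd hj j.not_lt_zero⟩
  | succ i ih =>
    intro hi
    obtain ⟨hr, hsd⟩ := ih (by omega)
    obtain ⟨γ, hγ⟩ : ∃ γ : ℝ, s (i + 1) = γ • d (i + 1) := by
      cases i with
      | zero =>
        exact ⟨c, by rw [pls.s_one, hH₀, smul_mulVec, one_mulVec, hr 0 le_rfl, cg.d_one, smul_neg]⟩
      | succ m =>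
        refine pls.exists_s_succ_succ_eq_smul hA cg hH₀ (hWY m (by omega)) (hdet m (by omega)) hr
          (fun l hl => ?_) hsd
        rw [← hr l hl]
        exact pls.r_ne_zero (hs l (by omega))
    refine ⟨fun l hl => ?_, fun j hj => ?_⟩
    · rcases Nat.le_succ_iff.mp hl with hl | rfl
      · exact hr l hl
      · exact pls.r_succ_eq_of_s_eq_smul cg (hr i le_rfl) (hs i hi) hγ
    · rcases Nat.lt_succ_iff_lt_or_eq.mp hj with hj | rfl
      · exact hsd j hj
      · exact ⟨γ, hγ⟩

end IsPLSRun

theorem stmt_1_general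
    {n k : ℕ} (A : Matrix (Fin n) (Fin n) ℝ) (hA : A.PosDef)
    (b : Fin n → ℝ) (a : ℝ) (ha : 0 < a)
    (A₀ H₀ : Matrix (Fin n) (Fin n) ℝ)
    (hA₀ : A₀ = a • (1 : Matrix (Fin n) (Fin n) ℝ))
    (hH₀def : H₀ = a⁻¹ • (1 : Matrix (Fin n) (Fin n) ℝ))
    (W₀H W₀A : Matrix (Fin n) (Fin n) ℝ) (hWH : W₀H.PosDef) (hWA : W₀A.IsSymm)
    (x r s y : ℕ → Fin n → ℝ) (α : ℕ → ℝ)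
    (H : ℕ → Matrix (Fin n) (Fin n) ℝ)
    (S Y Δ U : (i : ℕ) → Matrix (Fin n) (Fin i) ℝ)
    (hS : ∀ i (j : Fin n) (l : Fin i), S i j l = s (l.val + 1) j)
    (hY : ∀ i, Y i = A * S i)
    (hΔ : ∀ i, Δ i = S i - H₀ * Y i)
    (hU : ∀ i, U i = W₀H * Y i * ((Y i)ᵀ * W₀H * Y i)⁻¹)
    (hWAS : ∀ i, i ≤ k → W₀A * S i = Y i)
    (hcompat : ∀ i, i ≤ k → (S i)ᵀ * (W₀A * A₀⁻¹ - A * W₀H) = 0)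
    (hr0 : r 0 = A.mulVec (x 0) - b)
    (hH0 : H 0 = H₀)
    (hs : ∀ i, s (i + 1) = -(H i).mulVec (r i))
    (hy : ∀ i, y (i + 1) = A.mulVec (s (i + 1)))
    (hα : ∀ i, α (i + 1) = -(s (i + 1) ⬝ᵥ r i) / (s (i + 1) ⬝ᵥ y (i + 1)))
    (hx : ∀ i, x (i + 1) = x i + α (i + 1) • s (i + 1))
    (hr : ∀ i, r (i + 1) = r i + α (i + 1) • y (i + 1))
    (hH : ∀ i, H (i + 1) = H₀ + Δ (i + 1) * (U (i + 1))ᵀ + U (i + 1) * (Δ (i + 1))ᵀ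
      - U (i + 1) * (Y (i + 1))ᵀ * Δ (i + 1) * (U (i + 1))ᵀ)
    (h_wd : ∀ i, 1 ≤ i → i ≤ k → s i ≠ 0 ∧ IsUnit ((Y i)ᵀ * W₀H * Y i).det)
    (xCG rCG d : ℕ → Fin n → ℝ) (αCG : ℕ → ℝ)
    (hxCG0 : xCG 0 = x 0)
    (hrCG0 : rCG 0 = A.mulVec (xCG 0) - b)
    (hd1 : d 1 = -rCG 0)
    (hαCG : ∀ i, αCG (i + 1) = -(d (i + 1) ⬝ᵥ rCG i) / (d (i + 1) ⬝ᵥ A.mulVec (d (i + 1))))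
    (hxCG : ∀ i, xCG (i + 1) = xCG i + αCG (i + 1) • d (i + 1))
    (hrCG : ∀ i, rCG (i + 1) = A.mulVec (xCG (i + 1)) - b)
    (hd : ∀ i, d (i + 2) = -rCG (i + 1)
      + ((rCG (i + 1) ⬝ᵥ rCG (i + 1)) / (rCG i ⬝ᵥ rCG i)) • d (i + 1)) :
    ∀ i, i ≤ k → x i = xCG i := by
  have hWY : ∀ i ≤ k, W₀H * (A * S i) = a⁻¹ • (A * S i) := fun i hi =>
    mul_eq_inv_smul_of_compatible ha.ne' hA.isSymm hWH.isSymm hWA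
      ((hWAS i hi).trans (hY i)) (hA₀ ▸ hcompat i hi)
  have pls : IsPLSRun A H₀ W₀H r s α S :=
    { col_S := fun i t => funext fun j => hS i j t
      s_one := by rw [hs, hH0]
      s_succ := fun i => by rw [hs, hH, hΔ, hU, hY]; rfl
      α_succ := fun i => by rw [hα, hy]; rfl
      r_succ := fun i => by rw [hr, hy] }
  have hrCG' : ∀ i, rCG i = A *ᵥ xCG i - b
    | 0 => hrCG0
    | i + 1 => hrCG i
  have cg : IsCGRun A rCG d αCG :=
    { d_one := hd1
      α_succ := hαCG
      r_succ := fun i => by rw [hrCG, hxCG, hrCG' i, mulVec_add, mulVec_smul]; abel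
      d_succ := hd }
  have hsteps := pls.step_eq_of_isCGRun hA cg (by rw [hr0, hrCG0, hxCG0]) hH₀def
    (fun m hm => hWY (m + 1) hm) (fun m hm => hY (m + 1) ▸ (h_wd (m + 1) (by omega) hm).2)
    (fun i hi => (h_wd (i + 1) (by omega) hi).1)
  intro i
  induction i with
  | zero => exact fun _ => hxCG0.symm
  | succ i ih =>
    intro hi
    rw [hx, hxCG, ih (by omega), hsteps i hi]

/-- With a scalar prior mean and compatible covariance factors, the iterates of the
probabilistic linear solver coincide with the conjugate gradient iterates. -/
theorem stmt_1
    {n k : ℕ} (A : Matrix (Fin n) (Fin n) ℝ) (hA : A.PosDef)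
    (b : Fin n → ℝ) (a : ℝ) (ha : 0 < a)
    (A₀ H₀ : Matrix (Fin n) (Fin n) ℝ)
    (hA₀ : A₀ = a • (1 : Matrix (Fin n) (Fin n) ℝ))
    (hH₀def : H₀ = a⁻¹ • (1 : Matrix (Fin n) (Fin n) ℝ))
    (W₀H W₀A : Matrix (Fin n) (Fin n) ℝ) (hWH : W₀H.PosDef) (hWA : W₀A.IsSymm)
    (x r s y : ℕ → Fin n → ℝ) (α : ℕ → ℝ)
    (H : ℕ → Matrix (Fin n) (Fin n) ℝ)
    (S Y Δ U : (i : ℕ) → Matrix (Fin n) (Fin i) ℝ)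
    (hS : ∀ i (j : Fin n) (l : Fin i), S i j l = s (l.val + 1) j)
    (hY : ∀ i, Y i = A * S i)
    (hΔ : ∀ i, Δ i = S i - H₀ * Y i)
    (hU : ∀ i, U i = W₀H * Y i * ((Y i)ᵀ * W₀H * Y i)⁻¹)
    (hWAS : ∀ i, i ≤ k → W₀A * S i = Y i)
    (hcompat : ∀ i, i ≤ k → (S i)ᵀ * (W₀A * A₀⁻¹ - A * W₀H) = 0)
    (hx0 : x 0 = H₀.mulVec b)
    (hr0 : r 0 = A.mulVec (x 0) - b)
    (hH0 : H 0 = H₀)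
    (hs : ∀ i, s (i + 1) = -(H i).mulVec (r i))
    (hy : ∀ i, y (i + 1) = A.mulVec (s (i + 1)))
    (hα : ∀ i, α (i + 1) = -(s (i + 1) ⬝ᵥ r i) / (s (i + 1) ⬝ᵥ y (i + 1)))
    (hx : ∀ i, x (i + 1) = x i + α (i + 1) • s (i + 1))
    (hr : ∀ i, r (i + 1) = r i + α (i + 1) • y (i + 1))
    (hH : ∀ i, H (i + 1) = H₀ + Δ (i + 1) * (U (i + 1))ᵀ + U (i + 1) * (Δ (i + 1))ᵀ
      - U (i + 1) * (Y (i + 1))ᵀ * Δ (i + 1) * (U (i + 1))ᵀ)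
    (h_wd : ∀ i, 1 ≤ i → i ≤ k → s i ≠ 0 ∧ IsUnit ((Y i)ᵀ * W₀H * Y i).det)
    (xCG rCG d : ℕ → Fin n → ℝ) (αCG : ℕ → ℝ)
    (hxCG0 : xCG 0 = x 0)
    (hrCG0 : rCG 0 = A.mulVec (xCG 0) - b)
    (hd1 : d 1 = -rCG 0)
    (hαCG : ∀ i, αCG (i + 1) = -(d (i + 1) ⬝ᵥ rCG i) / (d (i + 1) ⬝ᵥ A.mulVec (d (i + 1))))
    (hxCG : ∀ i, xCG (i + 1) = xCG i + αCG (i + 1) • d (i + 1))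
    (hrCG : ∀ i, rCG (i + 1) = A.mulVec (xCG (i + 1)) - b)
    (hd : ∀ i, d (i + 2) = -rCG (i + 1)
      + ((rCG (i + 1) ⬝ᵥ rCG (i + 1)) / (rCG i ⬝ᵥ rCG i)) • d (i + 1)) :
    ∀ i, i ≤ k → x i = xCG i :=
  stmt_1_general A hA b a ha A₀ H₀ hA₀ hH₀def W₀H W₀A hWH hWA x r s y α H S Y Δ U hS hY hΔ hU hWAS
    hcompat hr0 hH0 hs hy hα hx hr hH h_wd xCG rCG d αCG hxCG0 hrCG0 hd1 hαCG hxCG hrCG hd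
end

section
/- Let A, A₀ be n×n symmetric positive definite real matrices, let s₁,…,s_k ∈ ℝⁿ be nonzero and pairwise A-conjugate (sᵢᵀ A sⱼ = 0 for i ≠ j), let S = [s₁,…,s_k], Y = AS, and let W₀ be a symmetric matrix with W₀S = Y. For 0 ≤ i ≤ k let Aᵢ be the symmetric-Kronecker posterior mean computed from the first i actions: Aᵢ = A₀ + Δᵢ Uᵢᵀ + Uᵢ Δᵢᵀ − Uᵢ Sᵢᵀ Δᵢ Uᵢᵀ, where Sᵢ = [s₁,…,sᵢ], Yᵢ = ASᵢ, Δᵢ = Yᵢ − A₀Sᵢ, Uᵢ = W₀Sᵢ(Sᵢᵀ W₀ Sᵢ)⁻¹. Then for every i ∈ {0,…,k−1}, the matrix A_{i+1} is symmetric positive definite. -/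
/-!
Once `W₀ * Sᵢ = A * Sᵢ`, the gain is `U = A Sᵢ G⁻¹` with `G = Sᵢᵀ A Sᵢ` diagonal and positive by
conjugacy, and `C = Sᵢ Uᵀ = Sᵢ G⁻¹ Sᵢᵀ A` is the `A`-orthogonal projection onto the range of `Sᵢ`:
`C² = C` and `Cᵀ A = A C`. These two identities turn the posterior mean into the Joseph form
`(1 - C)ᵀ A₀ (1 - C) + Cᵀ A C`, and a vector killed by `1 - C` is fixed by `C`, so one of the two
positive definite summands sees every nonzero vector.
-/

open Matrix

namespace Matrix

variable {n m ι R : Type*} [Fintype n]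

section

variable [Fintype m]

theorem dotProduct_conjTranspose_mul_mul_mulVec [CommRing R] [StarRing R]
    (B : Matrix n n R) (D : Matrix n m R) (x : m → R) :
    star x ⬝ᵥ ((Dᴴ * B * D) *ᵥ x) = star (D *ᵥ x) ⬝ᵥ (B *ᵥ (D *ᵥ x)) := by
  simp only [star_mulVec, dotProduct_mulVec, vecMul_vecMul, ← mulVec_mulVec]

theorem PosDef.conjTranspose_mul_mul_add_conjTranspose_mul_mul [DecidableEq n] [CommRing R]
    [PartialOrder R] [StarRing R] [IsOrderedAddMonoid R] {B₁ B₂ : Matrix n n R}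
    (hB₁ : B₁.PosDef) (hB₂ : B₂.PosDef) (C : Matrix n n R) :
    ((1 - C)ᴴ * B₁ * (1 - C) + Cᴴ * B₂ * C).PosDef := by
  refine PosDef.of_dotProduct_mulVec_pos
    ((isHermitian_conjTranspose_mul_mul _ hB₁.1).add (isHermitian_conjTranspose_mul_mul _ hB₂.1))
    fun x hx => ?_
  rw [add_mulVec, dotProduct_add, dotProduct_conjTranspose_mul_mul_mulVec,
    dotProduct_conjTranspose_mul_mul_mulVec]
  have hsplit : (1 - C) *ᵥ x + C *ᵥ x = x := by
    rw [sub_mulVec, one_mulVec, sub_add_cancel]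
  by_cases h : (1 - C) *ᵥ x = 0
  · rw [h, zero_add] at hsplit
    exact add_pos_of_nonneg_of_pos (hB₁.posSemidef.dotProduct_mulVec_nonneg _)
      (hB₂.dotProduct_mulVec_pos (by rwa [hsplit]))
  · exact add_pos_of_pos_of_nonneg (hB₁.dotProduct_mulVec_pos h)
      (hB₂.posSemidef.dotProduct_mulVec_nonneg _)

end

theorem transpose_mul_mul_eq_diagonal [DecidableEq ι] [CommSemiring R] {A : Matrix n n R}
    {S : Matrix n ι R} (hconj : Pairwise fun l m => Sᵀ l ⬝ᵥ A *ᵥ Sᵀ m = 0) :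
    Sᵀ * A * S = diagonal fun l => Sᵀ l ⬝ᵥ A *ᵥ Sᵀ l := by
  ext l m
  have hlm : (Sᵀ * A * S) l m = Sᵀ l ⬝ᵥ A *ᵥ Sᵀ m := by
    rw [Matrix.mul_assoc, mul_apply']
    rfl
  rw [hlm]
  obtain rfl | hne := eq_or_ne l m
  · rw [diagonal_apply_eq]
  · rw [diagonal_apply_ne _ hne, hconj hne]

theorem isUnit_det_transpose_mul_mul [Fintype ι] [DecidableEq ι] [Field R] [LinearOrder R]
    [IsStrictOrderedRing R] [StarRing R] [TrivialStar R] {A : Matrix n n R} (hA : A.PosDef)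
    {S : Matrix n ι R} (hS : ∀ l, Sᵀ l ≠ 0) (hconj : Pairwise fun l m => Sᵀ l ⬝ᵥ A *ᵥ Sᵀ m = 0) :
    IsUnit (Sᵀ * A * S).det := by
  rw [transpose_mul_mul_eq_diagonal hconj, det_diagonal]
  refine (Finset.prod_pos fun l _ => ?_).ne'.isUnit
  simpa only [star_trivial] using hA.dotProduct_mulVec_pos (hS l)

theorem IsSymm.transpose_mul_mul [CommRing R] {A : Matrix n n R} (hA : A.IsSymm)
    (S : Matrix n ι R) : (Sᵀ * A * S).IsSymm := by
  rw [IsSymm, transpose_mul, transpose_mul, transpose_transpose, hA.eq, Matrix.mul_assoc]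

theorem eq_josephForm_of_isIdempotentElem [DecidableEq n] [CommRing R] {A A₀ C : Matrix n n R}
    (hC : IsIdempotentElem C) (hCA : Cᵀ * A = A * C) :
    A₀ + (A - A₀) * C + Cᵀ * (A - A₀) - Cᵀ * (A - A₀) * C
      = (1 - C)ᵀ * A₀ * (1 - C) + Cᵀ * A * C := by
  have hCAC : Cᵀ * A * C = A * C := by rw [hCA, Matrix.mul_assoc, hC.eq]
  rw [transpose_sub, transpose_one, ← sub_eq_zero]
  calc _ = (Cᵀ * A - A * C) - 2 • (Cᵀ * A * C - A * C) := by noncomm_ring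
    _ = 0 := by rw [hCAC, hCA, sub_self, smul_zero, sub_zero]

end Matrix

section

variable {n ι R : Type*} [Fintype n] [Fintype ι] [DecidableEq ι] [CommRing R]

noncomputable def conjugateProjection (A : Matrix n n R) (S : Matrix n ι R) : Matrix n n R :=
  S * (Sᵀ * A * S)⁻¹ * Sᵀ * A

theorem isIdempotentElem_conjugateProjection {A : Matrix n n R} {S : Matrix n ι R}
    (hG : IsUnit (Sᵀ * A * S).det) : IsIdempotentElem (conjugateProjection A S) := by
  unfold conjugateProjection
  calc S * (Sᵀ * A * S)⁻¹ * Sᵀ * A * (S * (Sᵀ * A * S)⁻¹ * Sᵀ * A)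
      = S * ((Sᵀ * A * S)⁻¹ * (Sᵀ * A * S)) * (Sᵀ * A * S)⁻¹ * Sᵀ * A := by
        simp only [Matrix.mul_assoc]
    _ = S * (Sᵀ * A * S)⁻¹ * Sᵀ * A := by rw [nonsing_inv_mul _ hG, Matrix.mul_one]

theorem transpose_conjugateProjection {A : Matrix n n R} (hA : A.IsSymm) (S : Matrix n ι R) :
    (conjugateProjection A S)ᵀ = A * S * (Sᵀ * A * S)⁻¹ * Sᵀ := by
  rw [conjugateProjection, transpose_mul, transpose_mul, transpose_mul,
    transpose_transpose, hA.eq, (hA.transpose_mul_mul S).inv.eq]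
  simp only [Matrix.mul_assoc]

theorem transpose_conjugateProjection_mul {A : Matrix n n R} (hA : A.IsSymm) (S : Matrix n ι R) :
    (conjugateProjection A S)ᵀ * A = A * conjugateProjection A S := by
  rw [transpose_conjugateProjection hA]
  simp only [conjugateProjection, Matrix.mul_assoc]

noncomputable def posteriorGain (W₀ : Matrix n n R) (S : Matrix n ι R) : Matrix n ι R :=
  W₀ * S * (Sᵀ * W₀ * S)⁻¹

noncomputable def symmKroneckerPosteriorMean (A₀ W₀ : Matrix n n R) (S Y : Matrix n ι R) :
    Matrix n n R :=
  A₀ + (Y - A₀ * S) * (posteriorGain W₀ S)ᵀ + posteriorGain W₀ S * (Y - A₀ * S)ᵀ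
    - posteriorGain W₀ S * Sᵀ * (Y - A₀ * S) * (posteriorGain W₀ S)ᵀ

theorem posteriorGain_congr {W₀ W₁ : Matrix n n R} {S : Matrix n ι R} (h : W₀ * S = W₁ * S) :
    posteriorGain W₀ S = posteriorGain W₁ S := by
  rw [posteriorGain, posteriorGain, Matrix.mul_assoc Sᵀ W₀, Matrix.mul_assoc Sᵀ W₁, h]

theorem symmKroneckerPosteriorMean_congr {A₀ W₀ W₁ : Matrix n n R} {S : Matrix n ι R}
    (h : W₀ * S = W₁ * S) (Y : Matrix n ι R) :
    symmKroneckerPosteriorMean A₀ W₀ S Y = symmKroneckerPosteriorMean A₀ W₁ S Y := by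
  rw [symmKroneckerPosteriorMean, symmKroneckerPosteriorMean, posteriorGain_congr h]

theorem mul_transpose_posteriorGain {A : Matrix n n R} (hA : A.IsSymm) (S : Matrix n ι R) :
    S * (posteriorGain A S)ᵀ = conjugateProjection A S := by
  rw [posteriorGain, transpose_mul, transpose_mul, hA.eq, (hA.transpose_mul_mul S).inv.eq,
    conjugateProjection]
  simp only [Matrix.mul_assoc]

theorem symmKroneckerPosteriorMean_self {A A₀ : Matrix n n R} (hA : A.IsSymm) (hA₀ : A₀.IsSymm)
    (S : Matrix n ι R) :
    symmKroneckerPosteriorMean A₀ A S (A * S)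
      = A₀ + (A - A₀) * conjugateProjection A S + (conjugateProjection A S)ᵀ * (A - A₀)
        - (conjugateProjection A S)ᵀ * (A - A₀) * conjugateProjection A S := by
  have hSU := mul_transpose_posteriorGain hA S
  have hUS : posteriorGain A S * Sᵀ = (conjugateProjection A S)ᵀ := by
    rw [← hSU, transpose_mul, transpose_transpose]
  calc symmKroneckerPosteriorMean A₀ A S (A * S)
      = A₀ + (A - A₀) * (S * (posteriorGain A S)ᵀ) + posteriorGain A S * Sᵀ * (A - A₀)
        - posteriorGain A S * Sᵀ * (A - A₀) * (S * (posteriorGain A S)ᵀ) := by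
        rw [symmKroneckerPosteriorMean, ← Matrix.sub_mul, transpose_mul, (hA.sub hA₀).eq]
        simp only [Matrix.mul_assoc]
    _ = _ := by rw [hSU, hUS]

end

theorem stmt_2_general
    {n k : ℕ} (A A₀ : Matrix (Fin n) (Fin n) ℝ) (hA : A.PosDef) (hA₀ : A₀.PosDef)
    (s : Fin k → Fin n → ℝ) (hs : ∀ l, s l ≠ 0)
    (hconj : ∀ l m, l ≠ m → s l ⬝ᵥ A.mulVec (s m) = 0)
    (S : Matrix (Fin n) (Fin k) ℝ) (hSdef : ∀ (j : Fin n) (l : Fin k), S j l = s l j)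
    (W₀ : Matrix (Fin n) (Fin n) ℝ) (hW₀S : W₀ * S = A * S) :
    ∀ (i : ℕ) (hi : i + 1 ≤ k) (Si : Matrix (Fin n) (Fin (i + 1)) ℝ),
      (∀ (j : Fin n) (l : Fin (i + 1)), Si j l = s (Fin.castLE hi l) j) →
      (A₀ + (A * Si - A₀ * Si) * (W₀ * Si * (Siᵀ * W₀ * Si)⁻¹)ᵀ
        + (W₀ * Si * (Siᵀ * W₀ * Si)⁻¹) * (A * Si - A₀ * Si)ᵀ
        - (W₀ * Si * (Siᵀ * W₀ * Si)⁻¹) * Siᵀ * (A * Si - A₀ * Si)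
          * (W₀ * Si * (Siᵀ * W₀ * Si)⁻¹)ᵀ).PosDef := by
  intro i hi Si hSi
  have hcol : ∀ l, Siᵀ l = s (Fin.castLE hi l) := fun l => funext fun j => hSi j l
  have hW : W₀ * Si = A * Si := by
    ext j l
    simpa only [mul_apply, hSi, hSdef] using congr_fun₂ hW₀S j (Fin.castLE hi l)
  have hG : IsUnit (Siᵀ * A * Si).det :=
    isUnit_det_transpose_mul_mul hA (fun l => hcol l ▸ hs _) fun l m hlm => by
      simpa only [hcol] using hconj _ _ ((Fin.castLE_injective hi).ne hlm)
  have hAs : A.IsSymm := isHermitian_iff_isSymm.mp hA.isHermitian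
  have hA₀s : A₀.IsSymm := isHermitian_iff_isSymm.mp hA₀.isHermitian
  change (symmKroneckerPosteriorMean A₀ W₀ Si (A * Si)).PosDef
  rw [symmKroneckerPosteriorMean_congr hW, symmKroneckerPosteriorMean_self hAs hA₀s,
    eq_josephForm_of_isIdempotentElem
      (isIdempotentElem_conjugateProjection hG) (transpose_conjugateProjection_mul hAs Si)]
  simpa only [conjTranspose_eq_transpose_of_trivial] using
    hA₀.conjTranspose_mul_mul_add_conjTranspose_mul_mul hA (conjugateProjection A Si)

/-- Hereditary positive definiteness of the symmetric-Kronecker posterior means. -/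
theorem stmt_2
    {n k : ℕ} (A A₀ : Matrix (Fin n) (Fin n) ℝ) (hA : A.PosDef) (hA₀ : A₀.PosDef)
    (s : Fin k → Fin n → ℝ) (hs : ∀ l, s l ≠ 0)
    (hconj : ∀ l m, l ≠ m → s l ⬝ᵥ A.mulVec (s m) = 0)
    (S : Matrix (Fin n) (Fin k) ℝ) (hSdef : ∀ (j : Fin n) (l : Fin k), S j l = s l j)
    (W₀ : Matrix (Fin n) (Fin n) ℝ) (hW₀ : W₀.IsSymm) (hW₀S : W₀ * S = A * S) :
    ∀ (i : ℕ) (hi : i + 1 ≤ k) (Si : Matrix (Fin n) (Fin (i + 1)) ℝ),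
      (∀ (j : Fin n) (l : Fin (i + 1)), Si j l = s (Fin.castLE hi l) j) →
      (A₀ + (A * Si - A₀ * Si) * (W₀ * Si * (Siᵀ * W₀ * Si)⁻¹)ᵀ
        + (W₀ * Si * (Siᵀ * W₀ * Si)⁻¹) * (A * Si - A₀ * Si)ᵀ
        - (W₀ * Si * (Siᵀ * W₀ * Si)⁻¹) * Siᵀ * (A * Si - A₀ * Si)
          * (W₀ * Si * (Siᵀ * W₀ * Si)⁻¹)ᵀ).PosDef :=
  stmt_2_general A A₀ hA hA₀ s hs hconj S hSdef W₀ hW₀S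
end

section
/- Let A be an n×n symmetric positive definite real matrix, S ∈ ℝ^{n×k} with full column rank satisfying SᵀAS = I, and Y = AS. Let A₀ be symmetric positive definite, H₀ = A₀⁻¹, let W₀^A be a symmetric matrix with W₀^A S = Y, and let W₀^H be a symmetric positive definite matrix with Sᵀ(W₀^A A₀⁻¹ − A W₀^H) = 0. Define the symmetric-Kronecker posterior means A_k = A₀ + Δ_A U_Aᵀ + U_A Δ_Aᵀ − U_A Sᵀ Δ_A U_Aᵀ with Δ_A = Y − A₀S, U_A = W₀^A S(Sᵀ W₀^A S)⁻¹, and H_k = H₀ + Δ_H U_Hᵀ + U_H Δ_Hᵀ − U_H Yᵀ Δ_H U_Hᵀ with Δ_H = S − H₀Y, U_H = W₀^H Y(Yᵀ W₀^H Y)⁻¹. Then A_k is invertible and weak posterior correspondence holds: A_k⁻¹ Y = H_k Y. -/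
/-!
Since `W₀^A S = Y` and `Sᵀ Y = I`, the gain of the matrix model is `Y` itself, so that
`A_k = (I - Y Sᵀ) A₀ (I - S Yᵀ) + Y Yᵀ`, which is positive definite. Both posterior means
reproduce their data, `A_k S = Y` and `H_k Y = S`: the gain `U` satisfies `Uᵀ S = I`, and the
remaining correction `U (Δᵀ S - Sᵀ Δ)` vanishes because `Sᵀ Y = Yᵀ S`. Hence
`A_k⁻¹ Y = S = H_k Y`.
-/

open Matrix

namespace Matrix

variable {m n R : Type*} [Fintype m] [Fintype n] [DecidableEq m] [CommRing R]

/-- Posterior mean of a matrix model with prior mean `M₀` after observing `Y` at the actions `S`,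
with gain `U`; the paper's `A_k` and `H_k` are the case `U = symmKronGain W S`. -/
def symmKronUpdate (M₀ : Matrix n n R) (U S Y : Matrix n m R) : Matrix n n R :=
  M₀ + (Y - M₀ * S) * Uᵀ + U * (Y - M₀ * S)ᵀ - U * Sᵀ * (Y - M₀ * S) * Uᵀ

noncomputable def symmKronGain (W : Matrix n n R) (S : Matrix n m R) : Matrix n m R :=
  W * S * (Sᵀ * W * S)⁻¹

theorem transpose_symmKronGain_mul {W : Matrix n n R} (hW : Wᵀ = W) {S : Matrix n m R}
    (hSWS : IsUnit (Sᵀ * W * S).det) : (symmKronGain W S)ᵀ * S = 1 := by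
  have hGram : (Sᵀ * W * S)ᵀ = Sᵀ * W * S := by
    rw [transpose_mul, transpose_mul, transpose_transpose, hW, Matrix.mul_assoc]
  rw [symmKronGain, transpose_mul, transpose_nonsing_inv, hGram, transpose_mul, hW,
    Matrix.mul_assoc, nonsing_inv_mul _ hSWS]

theorem symmKronGain_eq {W : Matrix n n R} {S Y : Matrix n m R} (hWS : W * S = Y)
    (hSY : Sᵀ * Y = 1) : symmKronGain W S = Y := by
  rw [symmKronGain, Matrix.mul_assoc Sᵀ, hWS, hSY, inv_one, Matrix.mul_one]

theorem symmKronUpdate_mul {M₀ : Matrix n n R} (hM₀ : M₀ᵀ = M₀) {U S Y : Matrix n m R}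
    (hU : Uᵀ * S = 1) (hYS : Yᵀ * S = Sᵀ * Y) : symmKronUpdate M₀ U S Y * S = Y := by
  have hΔ : (Y - M₀ * S)ᵀ * S = Sᵀ * (Y - M₀ * S) := by
    rw [transpose_sub, transpose_mul, hM₀, Matrix.sub_mul, hYS, Matrix.mul_sub,
      Matrix.mul_assoc]
  simp only [symmKronUpdate, Matrix.sub_mul, Matrix.add_mul, Matrix.mul_assoc, hU,
    Matrix.mul_one]
  rw [hΔ]
  abel

theorem symmKronUpdate_self_eq [DecidableEq n] {M₀ : Matrix n n R} (hM₀ : M₀ᵀ = M₀)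
    {S Y : Matrix n m R} (hSY : Sᵀ * Y = 1) :
    symmKronUpdate M₀ Y S Y = (1 - S * Yᵀ)ᵀ * M₀ * (1 - S * Yᵀ) + Y * Yᵀ := by
  have hYSY : Y * Sᵀ * Y = Y := by rw [Matrix.mul_assoc, hSY, Matrix.mul_one]
  simp only [symmKronUpdate, transpose_sub, transpose_one, transpose_mul, transpose_transpose,
    hM₀, Matrix.sub_mul, Matrix.mul_sub, Matrix.mul_one, Matrix.one_mul, ← Matrix.mul_assoc,
    hYSY]
  abel

end Matrix

namespace Matrix.PosDef

variable {m n : Type*} [Fintype m] [Fintype n]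

/-- On the kernel of `Yᵀ` the first summand is the form of `M₀`, elsewhere the second one is
positive. -/
theorem transpose_mul_mul_add_mul_transpose [DecidableEq n] {M₀ : Matrix n n ℝ}
    (hM₀ : M₀.PosDef) (S Y : Matrix n m ℝ) :
    ((1 - S * Yᵀ)ᵀ * M₀ * (1 - S * Yᵀ) + Y * Yᵀ).PosDef := by
  set P := 1 - S * Yᵀ
  have hpsd := (hM₀.posSemidef.conjTranspose_mul_mul_same P).add
    (posSemidef_self_mul_conjTranspose Y)
  simp only [conjTranspose_eq_transpose_of_trivial] at hpsd
  refine PosDef.of_dotProduct_mulVec_pos hpsd.1 fun x hx => ?_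
  have hform : star x ⬝ᵥ ((Pᵀ * M₀ * P + Y * Yᵀ) *ᵥ x)
      = star (P *ᵥ x) ⬝ᵥ (M₀ *ᵥ (P *ᵥ x)) + star (Yᵀ *ᵥ x) ⬝ᵥ (Yᵀ *ᵥ x) := by
    simp only [add_mulVec, dotProduct_add, ← mulVec_mulVec, star_trivial]
    rw [dotProduct_mulVec x Pᵀ, vecMul_transpose, dotProduct_mulVec x Y, ← mulVec_transpose]
  rw [hform]
  by_cases hYx : Yᵀ *ᵥ x = 0
  · have hPx : P *ᵥ x = x := by
      rw [sub_mulVec, one_mulVec, ← mulVec_mulVec, hYx, mulVec_zero, sub_zero]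
    rw [hPx, hYx, dotProduct_zero, add_zero]
    exact hM₀.dotProduct_mulVec_pos hx
  · exact add_pos_of_nonneg_of_pos (hM₀.posSemidef.dotProduct_mulVec_nonneg _)
      (dotProduct_star_self_pos_iff.mpr hYx)

theorem isUnit_det_transpose_mul_mul [DecidableEq m] {W : Matrix n n ℝ}
    (hW : W.PosDef) {S Y : Matrix n m ℝ} (hSY : Sᵀ * Y = 1) : IsUnit (Yᵀ * W * Y).det := by
  have hY : Function.Injective Y.mulVec := fun x y hxy => by
    simpa only [mulVec_mulVec, hSY, one_mulVec] using congrArg (Sᵀ *ᵥ ·) hxy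
  simpa only [conjTranspose_eq_transpose_of_trivial] using
    (hW.conjTranspose_mul_mul_same hY).det_pos.ne'.isUnit

end Matrix.PosDef

theorem stmt_3_general
    {n k : ℕ} (A : Matrix (Fin n) (Fin n) ℝ)
    (S : Matrix (Fin n) (Fin k) ℝ) (hSAS : Sᵀ * A * S = 1)
    (A₀ : Matrix (Fin n) (Fin n) ℝ) (hA₀ : A₀.PosDef)
    (W₀A W₀H : Matrix (Fin n) (Fin n) ℝ) (hWH : W₀H.PosDef)
    (hWAS : W₀A * S = A * S) :
    let Y := A * S
    let ΔA := Y - A₀ * S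
    let UA := W₀A * S * (Sᵀ * W₀A * S)⁻¹
    let Ak := A₀ + ΔA * UAᵀ + UA * ΔAᵀ - UA * Sᵀ * ΔA * UAᵀ
    let ΔH := S - A₀⁻¹ * Y
    let UH := W₀H * Y * (Yᵀ * W₀H * Y)⁻¹
    let Hk := A₀⁻¹ + ΔH * UHᵀ + UH * ΔHᵀ - UH * Yᵀ * ΔH * UHᵀ
    IsUnit Ak.det ∧ Ak⁻¹ * Y = Hk * Y := by
  show IsUnit (symmKronUpdate A₀ (symmKronGain W₀A S) S (A * S)).det ∧
    (symmKronUpdate A₀ (symmKronGain W₀A S) S (A * S))⁻¹ * (A * S) =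
      symmKronUpdate A₀⁻¹ (symmKronGain W₀H (A * S)) (A * S) S * (A * S)
  set Y := A * S
  have hSY : Sᵀ * Y = 1 := by rw [← Matrix.mul_assoc, hSAS]
  have hYS : Yᵀ * S = 1 := by
    simpa only [transpose_mul, transpose_transpose, transpose_one] using congrArg transpose hSY
  have hA₀T : A₀ᵀ = A₀ := isHermitian_iff_isSymm.mp hA₀.1
  have hA₀invT : (A₀⁻¹)ᵀ = A₀⁻¹ := by rw [transpose_nonsing_inv, hA₀T]
  have hW₀HT : W₀Hᵀ = W₀H := isHermitian_iff_isSymm.mp hWH.1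
  rw [symmKronGain_eq hWAS hSY]
  have hAk : IsUnit (symmKronUpdate A₀ Y S Y).det := by
    rw [symmKronUpdate_self_eq hA₀T hSY]
    exact (hA₀.transpose_mul_mul_add_mul_transpose S Y).det_pos.ne'.isUnit
  have hAkS : symmKronUpdate A₀ Y S Y * S = Y :=
    symmKronUpdate_mul hA₀T hYS (by rw [hYS, hSY])
  have hHkY : symmKronUpdate A₀⁻¹ (symmKronGain W₀H Y) Y S * Y = S :=
    symmKronUpdate_mul hA₀invT
      (transpose_symmKronGain_mul hW₀HT (hWH.isUnit_det_transpose_mul_mul hSY))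
      (by rw [hSY, hYS])
  refine ⟨hAk, ?_⟩
  calc (symmKronUpdate A₀ Y S Y)⁻¹ * Y
      = (symmKronUpdate A₀ Y S Y)⁻¹ * (symmKronUpdate A₀ Y S Y * S) := by rw [hAkS]
    _ = S := nonsing_inv_mul_cancel_left _ S hAk
    _ = _ := hHkY.symm

/-- Weak posterior correspondence for the symmetric Kronecker covariance. -/
theorem stmt_3
    {n k : ℕ} (A : Matrix (Fin n) (Fin n) ℝ) (hA : A.PosDef)
    (S : Matrix (Fin n) (Fin k) ℝ) (hrank : S.rank = k) (hSAS : Sᵀ * A * S = 1)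
    (A₀ : Matrix (Fin n) (Fin n) ℝ) (hA₀ : A₀.PosDef)
    (W₀A W₀H : Matrix (Fin n) (Fin n) ℝ) (hWA : W₀A.IsSymm) (hWH : W₀H.PosDef)
    (hWAS : W₀A * S = A * S)
    (hcompat : Sᵀ * (W₀A * A₀⁻¹ - A * W₀H) = 0) :
    let Y := A * S
    let ΔA := Y - A₀ * S
    let UA := W₀A * S * (Sᵀ * W₀A * S)⁻¹
    let Ak := A₀ + ΔA * UAᵀ + UA * ΔAᵀ - UA * Sᵀ * ΔA * UAᵀ
    let ΔH := S - A₀⁻¹ * Y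
    let UH := W₀H * Y * (Yᵀ * W₀H * Y)⁻¹
    let Hk := A₀⁻¹ + ΔH * UHᵀ + UH * ΔHᵀ - UH * Yᵀ * ΔH * UHᵀ
    IsUnit Ak.det ∧ Ak⁻¹ * Y = Hk * Y :=
  stmt_3_general A S hSAS A₀ hA₀ W₀A W₀H hWH hWAS
end

section
/- Let A be an n×n symmetric real matrix, S ∈ ℝ^{n×k}, and Y = AS. Let A₀ and H₀ be symmetric n×n matrices and let W₀^A, W₀^H be n×n matrices such that Sᵀ W₀^A S and Yᵀ W₀^H Y are invertible. Define A_k = A₀ + Δ_A U_Aᵀ + U_A Δ_Aᵀ − U_A Sᵀ Δ_A U_Aᵀ with Δ_A = Y − A₀S, U_A = W₀^A S(Sᵀ W₀^A S)⁻¹, and H_k = H₀ + Δ_H U_Hᵀ + U_H Δ_Hᵀ − U_H Yᵀ Δ_H U_Hᵀ with Δ_H = S − H₀Y, U_H = W₀^H Y(Yᵀ W₀^H Y)⁻¹. Then A_k S = Y and H_k Y = S. -/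
open Matrix

lemma aux_inv {n k : ℕ} (B : Matrix (Fin n) (Fin k) ℝ) (W : Matrix (Fin n) (Fin n) ℝ)
    (h : IsUnit (Bᵀ * W * B).det) :
    (W * B * (Bᵀ * W * B)⁻¹)ᵀ * B = 1 := by
  have hT : IsUnit ((Bᵀ * W * B)ᵀ).det := by rwa [Matrix.det_transpose]
  calc (W * B * (Bᵀ * W * B)⁻¹)ᵀ * B
      = ((Bᵀ * W * B)ᵀ)⁻¹ * ((Bᵀ * W * B)ᵀ) := by
        simp [Matrix.transpose_mul, Matrix.transpose_nonsing_inv, Matrix.mul_assoc]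
    _ = 1 := Matrix.nonsing_inv_mul _ hT

/-- Subspace equivalency: the posterior means act like `A` on `span S` and like
`A⁻¹` on `span Y`. -/
theorem stmt_4
    {n k : ℕ} (A : Matrix (Fin n) (Fin n) ℝ) (hA : A.IsSymm)
    (S : Matrix (Fin n) (Fin k) ℝ)
    (A₀ H₀ : Matrix (Fin n) (Fin n) ℝ) (hA₀ : A₀.IsSymm) (hH₀ : H₀.IsSymm)
    (W₀A W₀H : Matrix (Fin n) (Fin n) ℝ)
    (hWAinv : IsUnit (Sᵀ * W₀A * S).det)
    (hWHinv : IsUnit ((A * S)ᵀ * W₀H * (A * S)).det) :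
    let Y := A * S
    let ΔA := Y - A₀ * S
    let UA := W₀A * S * (Sᵀ * W₀A * S)⁻¹
    let Ak := A₀ + ΔA * UAᵀ + UA * ΔAᵀ - UA * Sᵀ * ΔA * UAᵀ
    let ΔH := S - H₀ * Y
    let UH := W₀H * Y * (Yᵀ * W₀H * Y)⁻¹
    let Hk := H₀ + ΔH * UHᵀ + UH * ΔHᵀ - UH * Yᵀ * ΔH * UHᵀ
    Ak * S = Y ∧ Hk * Y = S := by
  intro Y ΔA UA Ak ΔH UH Hk
  have hUA : UAᵀ * S = 1 := aux_inv S W₀A hWAinv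
  have hUH : UHᵀ * Y = 1 := aux_inv Y W₀H hWHinv
  have hΔA : ΔAᵀ * S = Sᵀ * ΔA := by
    show ((A * S) - A₀ * S)ᵀ * S = Sᵀ * ((A * S) - A₀ * S)
    simp [Matrix.transpose_sub, Matrix.transpose_mul, hA.eq, hA₀.eq,
      Matrix.sub_mul, Matrix.mul_sub, Matrix.mul_assoc]
  have hΔH : ΔHᵀ * Y = Yᵀ * ΔH := by
    show (S - H₀ * (A * S))ᵀ * (A * S) = (A * S)ᵀ * (S - H₀ * (A * S))
    simp [Matrix.transpose_sub, Matrix.transpose_mul, hA.eq, hH₀.eq,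
      Matrix.sub_mul, Matrix.mul_sub, Matrix.mul_assoc]
  constructor
  · show (A₀ + ΔA * UAᵀ + UA * ΔAᵀ - UA * Sᵀ * ΔA * UAᵀ) * S = Y
    have hA₀S : A₀ * S + ΔA = Y := by simp [ΔA]
    calc (A₀ + ΔA * UAᵀ + UA * ΔAᵀ - UA * Sᵀ * ΔA * UAᵀ) * S
        = A₀ * S + ΔA * (UAᵀ * S) + UA * (ΔAᵀ * S) - UA * Sᵀ * ΔA * (UAᵀ * S) := by
          simp [Matrix.add_mul, Matrix.sub_mul, Matrix.mul_assoc]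
      _ = Y := by rw [hUA, hΔA]; simp [← hA₀S, Matrix.mul_assoc]
  · show (H₀ + ΔH * UHᵀ + UH * ΔHᵀ - UH * Yᵀ * ΔH * UHᵀ) * Y = S
    have hH₀Y : H₀ * Y + ΔH = S := by simp [ΔH]
    calc (H₀ + ΔH * UHᵀ + UH * ΔHᵀ - UH * Yᵀ * ΔH * UHᵀ) * Y
        = H₀ * Y + ΔH * (UHᵀ * Y) + UH * (ΔHᵀ * Y) - UH * Yᵀ * ΔH * (UHᵀ * Y) := by
          simp [Matrix.add_mul, Matrix.sub_mul, Matrix.mul_assoc]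
      _ = S := by rw [hUH, hΔH]; simp [← hH₀Y, Matrix.mul_assoc]
end

section
/- Let b ∈ ℝⁿ with b ≠ 0 and x₀ ∈ ℝⁿ with x₀ᵀb > 0, and let α be a real number with 0 < α < (bᵀx₀)/(bᵀb). Then the matrix H₀ = αI + ((x₀ − αb)(x₀ − αb)ᵀ)/((x₀ − αb)ᵀ b) is symmetric positive definite and satisfies H₀ b = x₀. -/
open Matrix

theorem posDef_smul_one_add_smul_vecMulVec_self {ι : Type*} [Fintype ι] [DecidableEq ι]
    {α c : ℝ} (hα : 0 < α) (hc : 0 ≤ c) (v : ι → ℝ) :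
    (α • (1 : Matrix ι ι ℝ) + c • vecMulVec v v).PosDef := by
  have hv : (vecMulVec v v).PosSemidef := by
    simpa using posSemidef_vecMulVec_self_star v
  exact (PosDef.one.smul hα).add_posSemidef (hv.smul hc)

theorem smul_one_add_inv_dotProduct_smul_vecMulVec_mulVec {R ι : Type*} [Field R] [Fintype ι]
    [DecidableEq ι] (α : R) {v b : ι → R} (hvb : v ⬝ᵥ b ≠ 0) :
    (α • (1 : Matrix ι ι R) + (v ⬝ᵥ b)⁻¹ • vecMulVec v v) *ᵥ b = α • b + v := by
  rw [add_mulVec, smul_mulVec, one_mulVec, smul_mulVec, vecMulVec_mulVec, op_smul_eq_smul,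
    smul_smul, inv_mul_cancel₀ hvb, one_smul]

theorem sub_smul_dotProduct_pos {ι : Type*} [Fintype ι] {b x : ι → ℝ} {α : ℝ}
    (hα0 : 0 < α) (hα : α < (b ⬝ᵥ x) / (b ⬝ᵥ b)) : 0 < (x - α • b) ⬝ᵥ b := by
  have hbb : 0 < b ⬝ᵥ b := by
    rcases div_pos_iff.mp (hα0.trans hα) with h | h
    · exact h.2
    · exact absurd h.2 (dotProduct_self_star_nonneg b).not_gt
  rw [lt_div_iff₀ hbb] at hα
  rw [sub_dotProduct, smul_dotProduct, smul_eq_mul, dotProduct_comm x]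
  linarith

theorem stmt_5_general
    {n : ℕ} (b x₀ : Fin n → ℝ)
    (α : ℝ) (hα0 : 0 < α) (hα : α < (b ⬝ᵥ x₀) / (b ⬝ᵥ b)) :
    let H₀ := α • (1 : Matrix (Fin n) (Fin n) ℝ)
      + ((x₀ - α • b) ⬝ᵥ b)⁻¹ • vecMulVec (x₀ - α • b) (x₀ - α • b)
    H₀.PosDef ∧ H₀.mulVec b = x₀ := by
  have hc := sub_smul_dotProduct_pos hα0 hα
  refine ⟨posDef_smul_one_add_smul_vecMulVec_self hα0 (inv_nonneg.mpr hc.le) _, ?_⟩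
  rw [smul_one_add_inv_dotProduct_smul_vecMulVec_mulVec α hc.ne', add_sub_cancel]

/-- Construction of a symmetric positive definite prior mean `H₀` for the inverse
model with `H₀ b = x₀`. -/
theorem stmt_5
    {n : ℕ} (b x₀ : Fin n → ℝ) (hb : b ≠ 0) (hx₀b : x₀ ⬝ᵥ b > 0)
    (α : ℝ) (hα0 : 0 < α) (hα : α < (b ⬝ᵥ x₀) / (b ⬝ᵥ b)) :
    let H₀ := α • (1 : Matrix (Fin n) (Fin n) ℝ)
      + ((x₀ - α • b) ⬝ᵥ b)⁻¹ • vecMulVec (x₀ - α • b) (x₀ - α • b)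
    H₀.PosDef ∧ H₀.mulVec b = x₀ :=
  stmt_5_general b x₀ α hα0 hα
end

section
/- Let b ∈ ℝⁿ with b ≠ 0 and x₀ ∈ ℝⁿ with x₀ᵀb > 0, let α be a real number with 0 < α < (bᵀx₀)/(bᵀb), and set H₀ = αI + ((x₀ − αb)(x₀ − αb)ᵀ)/((x₀ − αb)ᵀ b). Then H₀ is invertible with H₀⁻¹ = α⁻¹I − (α⁻¹/((x₀ − αb)ᵀ x₀)) (x₀ − αb)(x₀ − αb)ᵀ. -/
open Matrix

/-!
With `v = x₀ - α b`, `H₀ = α I + (vᵀb)⁻¹ v vᵀ` is a rank-one perturbation of a multiple of the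
identity, so the Sherman–Morrison formula applies. The bound on `α` makes `vᵀb > 0`, and since
`x₀ = v + α b`, the Sherman–Morrison denominator `α + vᵀv / vᵀb` equals `vᵀx₀ / vᵀb > 0`.
-/

theorem smul_one_add_smul_vecMulVec_mul {K ι : Type*} [Field K] [Fintype ι] [DecidableEq ι]
    {a : K} (c : K) (u v : ι → K) (ha : a ≠ 0) (hd : a + c * (v ⬝ᵥ u) ≠ 0) :
    (a • 1 + c • vecMulVec u v) * (a⁻¹ • 1 - (a⁻¹ * c / (a + c * (v ⬝ᵥ u))) • vecMulVec u v)
      = (1 : Matrix ι ι K) := by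
  simp only [Matrix.add_mul, Matrix.mul_sub, Matrix.smul_mul, Matrix.mul_smul, Matrix.one_mul,
    Matrix.mul_one, vecMulVec_mul_vecMulVec, vecMulVec_smul]
  match_scalars
  · field_simp
  · field_simp
    ring

theorem inv_smul_one_add_smul_vecMulVec {K ι : Type*} [Field K] [Fintype ι] [DecidableEq ι]
    {a : K} (c : K) (u v : ι → K) (ha : a ≠ 0) (hd : a + c * (v ⬝ᵥ u) ≠ 0) :
    IsUnit (a • 1 + c • vecMulVec u v).det ∧
      (a • 1 + c • vecMulVec u v)⁻¹
        = a⁻¹ • (1 : Matrix ι ι K) - (a⁻¹ * c / (a + c * (v ⬝ᵥ u))) • vecMulVec u v :=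
  have h := smul_one_add_smul_vecMulVec_mul c u v ha hd
  ⟨isUnit_det_of_right_inverse h, inv_eq_right_inv h⟩

theorem stmt_6_general
    {n : ℕ} (b x₀ : Fin n → ℝ)
    (α : ℝ) (hα0 : 0 < α) (hα : α < (b ⬝ᵥ x₀) / (b ⬝ᵥ b)) :
    let H₀ := α • (1 : Matrix (Fin n) (Fin n) ℝ)
      + ((x₀ - α • b) ⬝ᵥ b)⁻¹ • vecMulVec (x₀ - α • b) (x₀ - α • b)
    IsUnit H₀.det ∧
      H₀⁻¹ = α⁻¹ • (1 : Matrix (Fin n) (Fin n) ℝ)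
        - (α⁻¹ / ((x₀ - α • b) ⬝ᵥ x₀)) • vecMulVec (x₀ - α • b) (x₀ - α • b) := by
  intro H₀
  set v := x₀ - α • b with hv
  have hbb : 0 < b ⬝ᵥ b := by
    refine (show 0 ≤ b ⬝ᵥ b from dotProduct_self_star_nonneg b).lt_of_ne' fun h => ?_
    rw [h, div_zero] at hα
    exact hα0.not_gt hα
  have hvb : 0 < v ⬝ᵥ b := by
    have := (lt_div_iff₀ hbb).mp hα
    rw [hv, sub_dotProduct, smul_dotProduct, smul_eq_mul, dotProduct_comm]
    linarith
  have hvx₀ : v ⬝ᵥ x₀ = v ⬝ᵥ v + α * (v ⬝ᵥ b) := by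
    rw [← smul_eq_mul, ← dotProduct_smul, ← dotProduct_add, hv, sub_add_cancel]
  have hvx₀_pos : 0 < v ⬝ᵥ x₀ := by
    rw [hvx₀]
    have := dotProduct_self_star_nonneg v
    positivity
  have hdenom : α + (v ⬝ᵥ b)⁻¹ * (v ⬝ᵥ v) = (v ⬝ᵥ x₀) / (v ⬝ᵥ b) := by
    rw [hvx₀]
    field_simp
    ring
  have hcoeff : α⁻¹ * (v ⬝ᵥ b)⁻¹ / (α + (v ⬝ᵥ b)⁻¹ * (v ⬝ᵥ v)) = α⁻¹ / (v ⬝ᵥ x₀) := by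
    rw [hdenom]
    field_simp
  rw [← hcoeff]
  refine inv_smul_one_add_smul_vecMulVec _ v v hα0.ne' ?_
  rw [hdenom]
  positivity

/-- Explicit inverse of the constructed prior mean `H₀` (Sherman–Morrison). -/
theorem stmt_6
    {n : ℕ} (b x₀ : Fin n → ℝ) (hb : b ≠ 0) (hx₀b : x₀ ⬝ᵥ b > 0)
    (α : ℝ) (hα0 : 0 < α) (hα : α < (b ⬝ᵥ x₀) / (b ⬝ᵥ b)) :
    let H₀ := α • (1 : Matrix (Fin n) (Fin n) ℝ)
      + ((x₀ - α • b) ⬝ᵥ b)⁻¹ • vecMulVec (x₀ - α • b) (x₀ - α • b)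
    IsUnit H₀.det ∧
      H₀⁻¹ = α⁻¹ • (1 : Matrix (Fin n) (Fin n) ℝ)
        - (α⁻¹ / ((x₀ - α • b) ⬝ᵥ x₀)) • vecMulVec (x₀ - α • b) (x₀ - α • b) :=
  stmt_6_general b x₀ α hα0 hα
end

section
/- Let A be an n×n symmetric positive definite real matrix, S ∈ ℝ^{n×k}, Y = AS, let A₀ be an invertible n×n matrix with H₀ = A₀⁻¹, and let W₀^A, W₀^H be symmetric positive definite n×n matrices. Assume Sᵀ W₀^A S, Sᵀ W₀^A A₀⁻¹ A S, and Sᵀ Aᵀ W₀^H A S are invertible. Define the (asymmetric-model) posterior means A_k = A₀ + (Y − A₀S)(Sᵀ W₀^A S)⁻¹ Sᵀ W₀^A and H_k = H₀ + (S − H₀Y)(Yᵀ W₀^H Y)⁻¹ Yᵀ W₀^H, and assume A_k is invertible. Then A_k⁻¹ = H_k if and only if 0 = (AS − A₀S) [ (Sᵀ W₀^A A₀⁻¹ A S)⁻¹ Sᵀ W₀^A A₀⁻¹ − (Sᵀ Aᵀ W₀^H A S)⁻¹ Sᵀ Aᵀ W₀^H ]. -/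
open Matrix

set_option maxHeartbeats 1600000 in
/-- General correspondence condition for the asymmetric model: `A_k⁻¹ = H_k` iff
the stated residual condition holds. -/
theorem stmt_8
    {n k : ℕ} (A : Matrix (Fin n) (Fin n) ℝ) (hA : A.PosDef)
    (S : Matrix (Fin n) (Fin k) ℝ)
    (A₀ H₀ : Matrix (Fin n) (Fin n) ℝ) (hA₀inv : IsUnit A₀.det) (hH₀ : H₀ = A₀⁻¹)
    (W₀A W₀H : Matrix (Fin n) (Fin n) ℝ) (hWA : W₀A.PosDef) (hWH : W₀H.PosDef)
    (h1 : IsUnit (Sᵀ * W₀A * S).det)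
    (h2 : IsUnit (Sᵀ * W₀A * A₀⁻¹ * A * S).det)
    (h3 : IsUnit (Sᵀ * Aᵀ * W₀H * A * S).det) :
    let Y := A * S
    let Ak := A₀ + (Y - A₀ * S) * (Sᵀ * W₀A * S)⁻¹ * Sᵀ * W₀A
    let Hk := H₀ + (S - H₀ * Y) * (Yᵀ * W₀H * Y)⁻¹ * Yᵀ * W₀H
    IsUnit Ak.det →
      (Ak⁻¹ = Hk ↔
        0 = (A * S - A₀ * S) *
          ((Sᵀ * W₀A * A₀⁻¹ * A * S)⁻¹ * Sᵀ * W₀A * A₀⁻¹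
            - (Sᵀ * Aᵀ * W₀H * A * S)⁻¹ * Sᵀ * Aᵀ * W₀H)) := by
  subst hH₀
  intro Y Ak Hk hAk
  have hA₀r : A₀ * A₀⁻¹ = 1 := Matrix.mul_nonsing_inv _ hA₀inv
  have hA₀l : A₀⁻¹ * A₀ = 1 := Matrix.nonsing_inv_mul _ hA₀inv
  have hM1r : (Sᵀ * W₀A * S) * (Sᵀ * W₀A * S)⁻¹ = 1 := Matrix.mul_nonsing_inv _ h1
  have hM1l : (Sᵀ * W₀A * S)⁻¹ * (Sᵀ * W₀A * S) = 1 := Matrix.nonsing_inv_mul _ h1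
  have hM2r : (Sᵀ * W₀A * A₀⁻¹ * A * S) * (Sᵀ * W₀A * A₀⁻¹ * A * S)⁻¹ = 1 :=
    Matrix.mul_nonsing_inv _ h2
  have hM2l : (Sᵀ * W₀A * A₀⁻¹ * A * S)⁻¹ * (Sᵀ * W₀A * A₀⁻¹ * A * S) = 1 :=
    Matrix.nonsing_inv_mul _ h2
  have hM3r : (Sᵀ * Aᵀ * W₀H * A * S) * (Sᵀ * Aᵀ * W₀H * A * S)⁻¹ = 1 :=
    Matrix.mul_nonsing_inv _ h3
  have hM3l : (Sᵀ * Aᵀ * W₀H * A * S)⁻¹ * (Sᵀ * Aᵀ * W₀H * A * S) = 1 :=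
    Matrix.nonsing_inv_mul _ h3
  -- cancellation helpers, stated in right-associated form
  have cA₀ : ∀ {m : ℕ} (X : Matrix (Fin n) (Fin m) ℝ), A₀ * (A₀⁻¹ * X) = X := by
    intro m X; rw [← Matrix.mul_assoc, hA₀r, Matrix.one_mul]
  have cA₀' : ∀ {m : ℕ} (X : Matrix (Fin n) (Fin m) ℝ), A₀⁻¹ * (A₀ * X) = X := by
    intro m X; rw [← Matrix.mul_assoc, hA₀l, Matrix.one_mul]
  have c1 : ∀ {m : ℕ} (X : Matrix (Fin k) (Fin m) ℝ),
      Sᵀ * (W₀A * (S * ((Sᵀ * W₀A * S)⁻¹ * X))) = X := by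
    intro m X
    simp only [← Matrix.mul_assoc]
    rw [hM1r, Matrix.one_mul]
  have c1' : ∀ {m : ℕ} (X : Matrix (Fin k) (Fin m) ℝ),
      (Sᵀ * W₀A * S)⁻¹ * (Sᵀ * (W₀A * (S * X))) = X := by
    intro m X
    rw [show Sᵀ * (W₀A * (S * X)) = (Sᵀ * W₀A * S) * X by simp only [Matrix.mul_assoc],
      ← Matrix.mul_assoc, hM1l, Matrix.one_mul]
  have c2 : ∀ {m : ℕ} (X : Matrix (Fin k) (Fin m) ℝ),
      Sᵀ * (W₀A * (A₀⁻¹ * (A * (S * ((Sᵀ * W₀A * A₀⁻¹ * A * S)⁻¹ * X))))) = X := by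
    intro m X
    simp only [← Matrix.mul_assoc]
    rw [hM2r, Matrix.one_mul]
  have c2' : ∀ {m : ℕ} (X : Matrix (Fin k) (Fin m) ℝ),
      (Sᵀ * W₀A * A₀⁻¹ * A * S)⁻¹ * (Sᵀ * (W₀A * (A₀⁻¹ * (A * (S * X))))) = X := by
    intro m X
    rw [show Sᵀ * (W₀A * (A₀⁻¹ * (A * (S * X)))) = (Sᵀ * W₀A * A₀⁻¹ * A * S) * X by
        simp only [Matrix.mul_assoc],
      ← Matrix.mul_assoc, hM2l, Matrix.one_mul]
  have c3 : ∀ {m : ℕ} (X : Matrix (Fin k) (Fin m) ℝ),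
      Sᵀ * (Aᵀ * (W₀H * (A * (S * ((Sᵀ * Aᵀ * W₀H * A * S)⁻¹ * X))))) = X := by
    intro m X
    simp only [← Matrix.mul_assoc]
    rw [hM3r, Matrix.one_mul]
  have c3' : ∀ {m : ℕ} (X : Matrix (Fin k) (Fin m) ℝ),
      (Sᵀ * Aᵀ * W₀H * A * S)⁻¹ * (Sᵀ * (Aᵀ * (W₀H * (A * (S * X))))) = X := by
    intro m X
    rw [show Sᵀ * (Aᵀ * (W₀H * (A * (S * X)))) = (Sᵀ * Aᵀ * W₀H * A * S) * X by
        simp only [Matrix.mul_assoc],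
      ← Matrix.mul_assoc, hM3l, Matrix.one_mul]
  set R : Matrix (Fin n) (Fin k) ℝ := A * S - A₀ * S with hR
  set D : Matrix (Fin k) (Fin n) ℝ :=
    Sᵀ * W₀A * A₀⁻¹ -
      (Sᵀ * W₀A * A₀⁻¹ * A * S) * ((Sᵀ * Aᵀ * W₀H * A * S)⁻¹ * (Sᵀ * Aᵀ * W₀H)) with hD
  -- the key algebraic identity
  have key : Ak * Hk = 1 + R * ((Sᵀ * W₀A * S)⁻¹ * D) := by
    show (A₀ + (Y - A₀ * S) * (Sᵀ * W₀A * S)⁻¹ * Sᵀ * W₀A) *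
        (A₀⁻¹ + (S - A₀⁻¹ * Y) * (Yᵀ * W₀H * Y)⁻¹ * Yᵀ * W₀H) = _
    show (A₀ + (A * S - A₀ * S) * (Sᵀ * W₀A * S)⁻¹ * Sᵀ * W₀A) *
        (A₀⁻¹ + (S - A₀⁻¹ * (A * S)) * ((A * S)ᵀ * W₀H * (A * S))⁻¹ * (A * S)ᵀ * W₀H) = _
    rw [hD, hR]
    simp only [Matrix.transpose_mul]
    simp only [Matrix.mul_add, Matrix.add_mul, Matrix.mul_sub, Matrix.sub_mul,
      Matrix.mul_assoc]
    simp only [show (Sᵀ * (W₀A * S))⁻¹ = (Sᵀ * W₀A * S)⁻¹ by rw [Matrix.mul_assoc],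
      show (Sᵀ * (W₀A * (A₀⁻¹ * (A * S))))⁻¹ = (Sᵀ * W₀A * A₀⁻¹ * A * S)⁻¹ by
        simp only [Matrix.mul_assoc],
      show (Sᵀ * (Aᵀ * (W₀H * (A * S))))⁻¹ = (Sᵀ * Aᵀ * W₀H * A * S)⁻¹ by
        simp only [Matrix.mul_assoc],
      hA₀r, cA₀, cA₀', c1, c1', c2, c2', c3, c3']
    abel
  -- `Ak⁻¹ = Hk` iff `Ak * Hk = 1`
  have step1 : Ak⁻¹ = Hk ↔ Ak * Hk = 1 := by
    constructor
    · intro h; rw [← h]; exact Matrix.mul_nonsing_inv _ hAk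
    · intro h; exact Matrix.inv_eq_right_inv h
  have step2 : Ak * Hk = 1 ↔ R * ((Sᵀ * W₀A * S)⁻¹ * D) = 0 := by
    rw [key]
    constructor
    · intro h
      have := congrArg (fun M => M - (1 : Matrix (Fin n) (Fin n) ℝ)) h
      simpa using this
    · intro h; rw [h, add_zero]
  -- the split identity
  have hsplit : Sᵀ * (W₀A * (A₀⁻¹ * R)) =
      Sᵀ * W₀A * A₀⁻¹ * A * S - Sᵀ * W₀A * S := by
    rw [hR]
    simp only [Matrix.mul_sub, Matrix.mul_assoc, cA₀']
  have step3 : R * ((Sᵀ * W₀A * S)⁻¹ * D) = 0 ↔ R * ((Sᵀ * W₀A * A₀⁻¹ * A * S)⁻¹ * D) = 0 := by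
    constructor
    · intro h
      have h0 : Sᵀ * (W₀A * (A₀⁻¹ * (R * ((Sᵀ * W₀A * S)⁻¹ * D)))) = 0 := by
        rw [h]; simp [Matrix.mul_zero]
      have h1' : (Sᵀ * W₀A * A₀⁻¹ * A * S) * ((Sᵀ * W₀A * S)⁻¹ * D) - D = 0 := by
        calc (Sᵀ * W₀A * A₀⁻¹ * A * S) * ((Sᵀ * W₀A * S)⁻¹ * D) - D
            = (Sᵀ * W₀A * A₀⁻¹ * A * S - Sᵀ * W₀A * S) * ((Sᵀ * W₀A * S)⁻¹ * D) := by
              rw [Matrix.sub_mul]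
              congr 1
              rw [← Matrix.mul_assoc, hM1r, Matrix.one_mul]
          _ = Sᵀ * (W₀A * (A₀⁻¹ * (R * ((Sᵀ * W₀A * S)⁻¹ * D)))) := by
              rw [← hsplit]; simp only [Matrix.mul_assoc]
          _ = 0 := h0
      have h2' : (Sᵀ * W₀A * S)⁻¹ * D = (Sᵀ * W₀A * A₀⁻¹ * A * S)⁻¹ * D := by
        have := sub_eq_zero.mp h1'
        calc (Sᵀ * W₀A * S)⁻¹ * D
            = (Sᵀ * W₀A * A₀⁻¹ * A * S)⁻¹ *
                ((Sᵀ * W₀A * A₀⁻¹ * A * S) * ((Sᵀ * W₀A * S)⁻¹ * D)) := by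
              rw [← Matrix.mul_assoc, hM2l, Matrix.one_mul]
          _ = (Sᵀ * W₀A * A₀⁻¹ * A * S)⁻¹ * D := by rw [this]
      rw [← h2']; exact h
    · intro h
      have h0 : Sᵀ * (W₀A * (A₀⁻¹ * (R * ((Sᵀ * W₀A * A₀⁻¹ * A * S)⁻¹ * D)))) = 0 := by
        rw [h]; simp [Matrix.mul_zero]
      have h1' : D - (Sᵀ * W₀A * S) * ((Sᵀ * W₀A * A₀⁻¹ * A * S)⁻¹ * D) = 0 := by
        calc D - (Sᵀ * W₀A * S) * ((Sᵀ * W₀A * A₀⁻¹ * A * S)⁻¹ * D)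
            = (Sᵀ * W₀A * A₀⁻¹ * A * S - Sᵀ * W₀A * S) *
                ((Sᵀ * W₀A * A₀⁻¹ * A * S)⁻¹ * D) := by
              rw [Matrix.sub_mul]
              congr 1
              rw [← Matrix.mul_assoc, hM2r, Matrix.one_mul]
          _ = Sᵀ * (W₀A * (A₀⁻¹ * (R * ((Sᵀ * W₀A * A₀⁻¹ * A * S)⁻¹ * D)))) := by
              rw [← hsplit]; simp only [Matrix.mul_assoc]
          _ = 0 := h0
      have h2' : (Sᵀ * W₀A * S)⁻¹ * D = (Sᵀ * W₀A * A₀⁻¹ * A * S)⁻¹ * D := by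
        have hDD : D = (Sᵀ * W₀A * S) * ((Sᵀ * W₀A * A₀⁻¹ * A * S)⁻¹ * D) :=
          sub_eq_zero.mp h1'
        calc (Sᵀ * W₀A * S)⁻¹ * D
            = (Sᵀ * W₀A * S)⁻¹ * ((Sᵀ * W₀A * S) * ((Sᵀ * W₀A * A₀⁻¹ * A * S)⁻¹ * D)) := by
              rw [← hDD]
          _ = (Sᵀ * W₀A * A₀⁻¹ * A * S)⁻¹ * D := by
              rw [← Matrix.mul_assoc, hM1l, Matrix.one_mul]
      rw [h2']; exact h
  -- identify the residual with the statement's right-hand side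
  have step4 : (Sᵀ * W₀A * A₀⁻¹ * A * S)⁻¹ * D =
      (Sᵀ * W₀A * A₀⁻¹ * A * S)⁻¹ * Sᵀ * W₀A * A₀⁻¹
        - (Sᵀ * Aᵀ * W₀H * A * S)⁻¹ * Sᵀ * Aᵀ * W₀H := by
    rw [hD, Matrix.mul_sub]
    congr 1
    · simp only [Matrix.mul_assoc]
    · rw [← Matrix.mul_assoc, hM2l, Matrix.one_mul]
      simp only [Matrix.mul_assoc]
  rw [step1, step2, step3, step4, eq_comm]
end

section
/- Let A be an n×n symmetric positive definite real matrix, S ∈ ℝ^{n×n} invertible (i.e. n linearly independent actions), Y = AS, A₀ invertible with H₀ = A₀⁻¹, and let W₀^A, W₀^H be symmetric positive definite n×n matrices. Define A_k = A₀ + (Y − A₀S)(Sᵀ W₀^A S)⁻¹ Sᵀ W₀^A and H_k = H₀ + (S − H₀Y)(Yᵀ W₀^H Y)⁻¹ Yᵀ W₀^H. Then A_k is invertible and A_k⁻¹ = H_k. -/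
open Matrix

lemma helper9 {n : ℕ} (M W : Matrix (Fin n) (Fin n) ℝ)
    (hM : IsUnit M.det) (hW : IsUnit W.det) :
    M * (Mᵀ * W * M)⁻¹ * Mᵀ * W = 1 := by
  have hMT : IsUnit Mᵀ.det := by rwa [Matrix.det_transpose]
  rw [Matrix.mul_inv_rev, Matrix.mul_inv_rev]
  calc M * (M⁻¹ * (W⁻¹ * Mᵀ⁻¹)) * Mᵀ * W
      = (M * M⁻¹) * W⁻¹ * (Mᵀ⁻¹ * Mᵀ) * W := by noncomm_ring
    _ = 1 := by
        rw [Matrix.mul_nonsing_inv _ hM, Matrix.nonsing_inv_mul _ hMT]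
        simp [Matrix.nonsing_inv_mul _ hW]

/-- Posterior correspondence at convergence: after `n` linearly independent actions
the asymmetric posterior means satisfy `A_k⁻¹ = H_k`. -/
theorem stmt_9
    {n : ℕ} (A : Matrix (Fin n) (Fin n) ℝ) (hA : A.PosDef)
    (S : Matrix (Fin n) (Fin n) ℝ) (hS : IsUnit S.det)
    (A₀ H₀ : Matrix (Fin n) (Fin n) ℝ) (hA₀inv : IsUnit A₀.det) (hH₀ : H₀ = A₀⁻¹)
    (W₀A W₀H : Matrix (Fin n) (Fin n) ℝ) (hWA : W₀A.PosDef) (hWH : W₀H.PosDef) :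
    let Y := A * S
    let Ak := A₀ + (Y - A₀ * S) * (Sᵀ * W₀A * S)⁻¹ * Sᵀ * W₀A
    let Hk := H₀ + (S - H₀ * Y) * (Yᵀ * W₀H * Y)⁻¹ * Yᵀ * W₀H
    IsUnit Ak.det ∧ Ak⁻¹ = Hk := by
  intro Y Ak Hk
  have hAdet : IsUnit A.det := isUnit_iff_ne_zero.mpr hA.det_pos.ne'
  have hY : IsUnit Y.det := by
    show IsUnit (A * S).det; rw [Matrix.det_mul]; exact hAdet.mul hS
  have h1 : S * (Sᵀ * W₀A * S)⁻¹ * Sᵀ * W₀A = 1 :=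
    helper9 S W₀A hS (isUnit_iff_ne_zero.mpr hWA.det_pos.ne')
  have h2 : Y * (Yᵀ * W₀H * Y)⁻¹ * Yᵀ * W₀H = 1 :=
    helper9 Y W₀H hY (isUnit_iff_ne_zero.mpr hWH.det_pos.ne')
  have hAk : Ak = A := by
    show A₀ + (Y - A₀ * S) * (Sᵀ * W₀A * S)⁻¹ * Sᵀ * W₀A = A
    have : (Y - A₀ * S) * (Sᵀ * W₀A * S)⁻¹ * Sᵀ * W₀A
        = (A - A₀) * (S * (Sᵀ * W₀A * S)⁻¹ * Sᵀ * W₀A) := by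
      show (A * S - A₀ * S) * _ * _ * _ = _
      noncomm_ring
    rw [this, h1, mul_one]; abel
  have hHk : Hk = A⁻¹ := by
    show H₀ + (S - H₀ * Y) * (Yᵀ * W₀H * Y)⁻¹ * Yᵀ * W₀H = A⁻¹
    have hSY : S = A⁻¹ * Y := by
      show S = A⁻¹ * (A * S)
      rw [← Matrix.mul_assoc, Matrix.nonsing_inv_mul _ hAdet, Matrix.one_mul]
    have : (S - H₀ * Y) * (Yᵀ * W₀H * Y)⁻¹ * Yᵀ * W₀H
        = (A⁻¹ - H₀) * (Y * (Yᵀ * W₀H * Y)⁻¹ * Yᵀ * W₀H) := by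
      rw [hSY]; noncomm_ring
    rw [this, h2, mul_one]; abel
  refine ⟨hAk ▸ hAdet, ?_⟩
  rw [hAk, hHk]
end

section
/- Let A be an n×n symmetric invertible real matrix, C ∈ ℝ^{n×k} with CᵀAC invertible, and Y ∈ ℝ^{k×n} such that YC is symmetric ((YC)ᵀ = YC). Define Z = (CᵀAC)⁻¹ Y (2A⁻¹ − C(CᵀAC)⁻¹Cᵀ). Then (1/2)( (CᵀAC) Z A + CᵀA Zᵀ CᵀA ) = Y. -/
open Matrix

/-- Matrix form of the right-inverse property of the Gram matrix arising in
symmetric matrix-variate Gaussian inference. -/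
theorem stmt_12
    {n k : ℕ} (A : Matrix (Fin n) (Fin n) ℝ) (hAsym : A.IsSymm) (hAinv : IsUnit A.det)
    (C : Matrix (Fin n) (Fin k) ℝ) (hCAC : IsUnit (Cᵀ * A * C).det)
    (Y : Matrix (Fin k) (Fin n) ℝ) (hYC : (Y * C)ᵀ = Y * C) :
    let Z := (Cᵀ * A * C)⁻¹ * Y * ((2 : ℝ) • A⁻¹ - C * (Cᵀ * A * C)⁻¹ * Cᵀ)
    (1 / 2 : ℝ) • ((Cᵀ * A * C) * Z * A + Cᵀ * A * Zᵀ * Cᵀ * A) = Y := by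
  intro Z
  set S := (Cᵀ * A * C)⁻¹ with hS
  set D := (2 : ℝ) • A⁻¹ - C * S * Cᵀ with hD
  have hBsymm : (Cᵀ * A * C)ᵀ = Cᵀ * A * C := by
    simp [Matrix.transpose_mul, Matrix.mul_assoc, hAsym.eq]
  have hSsym : Sᵀ = S := by
    rw [hS, Matrix.transpose_nonsing_inv, hBsymm]
  have hAiT : (A⁻¹)ᵀ = A⁻¹ := by
    rw [Matrix.transpose_nonsing_inv, hAsym.eq]
  have hDT : Dᵀ = D := by
    rw [hD]
    simp [Matrix.transpose_sub, Matrix.transpose_smul, Matrix.transpose_mul, hSsym, hAiT,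
      Matrix.mul_assoc]
  have h1 : (Cᵀ * A * C) * Z * A = (2 : ℝ) • Y - Y * (C * S * Cᵀ) * A := by
    have e1 : (Cᵀ * A * C) * Z = Y * D := by
      rw [show Z = S * Y * D from rfl, Matrix.mul_assoc S Y D,
        Matrix.mul_nonsing_inv_cancel_left _ _ hCAC]
    rw [e1, hD, Matrix.mul_sub, Matrix.sub_mul, Matrix.mul_smul, Matrix.smul_mul,
      Matrix.nonsing_inv_mul_cancel_right _ _ hAinv]
  have hCAD : Cᵀ * A * D = Cᵀ := by
    rw [hD, Matrix.mul_sub, Matrix.mul_smul]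
    have : Cᵀ * A * A⁻¹ = Cᵀ := Matrix.mul_nonsing_inv_cancel_right _ _ hAinv
    rw [this]
    have : Cᵀ * A * (C * S * Cᵀ) = Cᵀ := by
      rw [Matrix.mul_assoc C S Cᵀ, ← Matrix.mul_assoc,
        Matrix.mul_nonsing_inv_cancel_left _ _ hCAC]
    rw [this, two_smul]
    abel
  have h2 : Cᵀ * A * Zᵀ * Cᵀ * A = Y * (C * S * Cᵀ) * A := by
    have hZT : Zᵀ = D * (Yᵀ * S) := by
      rw [show Z = S * Y * D from rfl]
      simp [Matrix.transpose_mul, hDT, hSsym, Matrix.mul_assoc]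
    rw [hZT, ← Matrix.mul_assoc, hCAD, ← Matrix.mul_assoc, ← Matrix.transpose_mul, hYC]
    rw [Matrix.mul_assoc (Y*C) S Cᵀ, Matrix.mul_assoc Y C (S*Cᵀ), ← Matrix.mul_assoc C S Cᵀ]
  rw [h1, h2, sub_add_cancel, smul_smul]
  norm_num
end

section
/- Let A be an n×n symmetric positive definite real matrix, A₀ an n×n symmetric positive definite matrix, S ∈ ℝ^{n×k} with full column rank, and W₀ a symmetric n×n matrix with W₀S = AS. Set Δ = AS − A₀S, Λ = SᵀW₀S, U = W₀S Λ⁻¹, and V = (I − ½USᵀ)Δ. Then Uᵀ A₀⁻¹ U is invertible, and the Schur complement of the block Uᵀ A₀⁻¹ U in the block matrix [[UᵀA₀⁻¹U, I + UᵀA₀⁻¹V], [I + VᵀA₀⁻¹U, VᵀA₀⁻¹V]] equals −Λ; that is, VᵀA₀⁻¹V − (I + VᵀA₀⁻¹U)(UᵀA₀⁻¹U)⁻¹(I + UᵀA₀⁻¹V) = −Λ. -/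
/-!
With `Y = AS = W₀S`, `Λ = SᵀY`, `Γ = SᵀA₀S`, `G = YᵀA₀⁻¹Y` and `B = I + Λ⁻¹Γ`, one has
`V = ½ Y B − A₀S`, and every block is expressed through `G`:
`UᵀA₀⁻¹U = Λ⁻¹GΛ⁻¹`, `I + UᵀA₀⁻¹V = ½ Λ⁻¹GB` and, since `ΛB = BᵀΛ = Λ + Γ`,
`VᵀA₀⁻¹V = ¼ BᵀGB − Λ`. The `G`-terms cancel in the Schur complement, leaving `−Λ`.
Positive definiteness of `A`, `A₀` and full column rank of `S` make `Λ` and `G` invertible.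
-/

open Matrix

lemma Matrix.mulVec_injective_of_rank_eq_card {K m n : Type*} [Field K] [Fintype m] [Fintype n]
    (S : Matrix m n K) (h : S.rank = Fintype.card n) : Function.Injective S.mulVec := by
  have h1 := LinearMap.finrank_range_add_finrank_ker S.mulVecLin
  rw [Module.finrank_fintype_fun_eq_card] at h1
  rw [Matrix.rank] at h
  have hker : LinearMap.ker S.mulVecLin = ⊥ := Submodule.finrank_eq_zero.mp (by omega)
  exact LinearMap.ker_eq_bot.mp hker

namespace Matrix.PosDef

variable {R : Type*} [Ring R] [PartialOrder R] [StarRing R] [TrivialStar R] {n m : Type*}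

lemma transpose_mul_mul_same [Fintype n] [Fintype m] {A : Matrix n n R} {B : Matrix n m R}
    (hA : A.PosDef) (hB : Function.Injective B.mulVec) : (Bᵀ * A * B).PosDef := by
  simpa only [conjTranspose_eq_transpose_of_trivial] using hA.conjTranspose_mul_mul_same hB

lemma isSymm_s15 {A : Matrix n n R} (hA : A.PosDef) : A.IsSymm :=
  isHermitian_iff_isSymm.mp hA.isHermitian

lemma isUnit_det {K : Type*} [Field K] [PartialOrder K] [StarRing K] [Fintype n] [DecidableEq n]
    {A : Matrix n n K} (hA : A.PosDef) : IsUnit A.det :=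
  (isUnit_iff_isUnit_det A).mp hA.isUnit

end Matrix.PosDef

section SchurComplement

variable {K : Type*} [Field K] [CharZero K] {n m : Type*} [Fintype n] [Fintype m]
  [DecidableEq n] [DecidableEq m]

lemma sub_mul_inv_mul_eq_neg_of_factored {Λ G B M C C' D : Matrix m m K} (hΛ : IsUnit Λ.det)
    (hG : IsUnit G.det) (hM : M = Λ⁻¹ * G * Λ⁻¹) (hC : C = (1 / 2 : K) • (Λ⁻¹ * G * B))
    (hC' : C' = (1 / 2 : K) • (Bᵀ * G * Λ⁻¹)) (hD : D = (1 / 4 : K) • (Bᵀ * G * B) - Λ) :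
    D - C' * M⁻¹ * C = -Λ := by
  rw [hD, hC', hM, hC, Matrix.mul_inv_rev, Matrix.mul_inv_rev, nonsing_inv_nonsing_inv _ hΛ]
  simp only [Matrix.smul_mul, Matrix.mul_smul, smul_smul, Matrix.mul_assoc,
    nonsing_inv_mul_cancel_left _ _ hΛ, mul_nonsing_inv_cancel_left _ _ hΛ,
    mul_nonsing_inv_cancel_left _ _ hG]
  module

lemma one_sub_half_smul_mul_sub_eq (A₀ : Matrix n n K) (S Y : Matrix n m K)
    (hΛ : IsUnit (Sᵀ * Y).det) :
    (1 - (1 / 2 : K) • (Y * (Sᵀ * Y)⁻¹ * Sᵀ)) * (Y - A₀ * S)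
      = (1 / 2 : K) • (Y * (1 + (Sᵀ * Y)⁻¹ * (Sᵀ * A₀ * S))) - A₀ * S := by
  simp only [Matrix.sub_mul, Matrix.mul_sub, Matrix.mul_add, Matrix.smul_mul, Matrix.mul_assoc,
    Matrix.one_mul, Matrix.mul_one, nonsing_inv_mul _ hΛ]
  module

theorem schur_complement_eq_neg (A₀ : Matrix n n K) (S Y : Matrix n m K) (hA₀ : A₀.IsSymm)
    (hA₀u : IsUnit A₀.det) (hΛ : (Sᵀ * Y).IsSymm) (hΛu : IsUnit (Sᵀ * Y).det)
    (hG : IsUnit (Yᵀ * A₀⁻¹ * Y).det) :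
    let U := Y * (Sᵀ * Y)⁻¹
    let V := (1 - (1 / 2 : K) • (U * Sᵀ)) * (Y - A₀ * S)
    IsUnit (Uᵀ * A₀⁻¹ * U).det ∧
      Vᵀ * A₀⁻¹ * V - (1 + Vᵀ * A₀⁻¹ * U) * (Uᵀ * A₀⁻¹ * U)⁻¹ * (1 + Uᵀ * A₀⁻¹ * V)
        = -(Sᵀ * Y) := by
  intro U V
  have hV : V = (1 / 2 : K) • (Y * (1 + (Sᵀ * Y)⁻¹ * (Sᵀ * A₀ * S))) - A₀ * S :=
    one_sub_half_smul_mul_sub_eq A₀ S Y hΛu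
  have hU : U = Y * (Sᵀ * Y)⁻¹ := rfl
  set Λ := Sᵀ * Y with hΛdef
  set G := Yᵀ * A₀⁻¹ * Y with hGdef
  set Γ := Sᵀ * A₀ * S with hΓdef
  set B := 1 + Λ⁻¹ * Γ with hBdef
  clear_value U V B Γ G Λ
  have hYS : Yᵀ * S = Λ := by rw [← hΛ.eq, hΛdef, transpose_mul, transpose_transpose]
  have hSYX (X : Matrix m m K) : Sᵀ * (Y * X) = Λ * X := by rw [← Matrix.mul_assoc, hΛdef]
  have hSA₀S : Sᵀ * (A₀ * S) = Γ := by rw [hΓdef, Matrix.mul_assoc]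
  have hUt : Uᵀ = Λ⁻¹ * Yᵀ := by rw [hU, transpose_mul, hΛ.inv.eq]
  have hΛB : Λ * B = Λ + Γ := by
    rw [hBdef, Matrix.mul_add, Matrix.mul_one, mul_nonsing_inv_cancel_left _ _ hΛu]
  have hBΛ : Bᵀ * Λ = Λ + Γ := by
    rw [← hΛ.eq, ← transpose_mul, hΛB, transpose_add, hΛ.eq, hΓdef, transpose_mul,
      transpose_mul, hA₀.eq, transpose_transpose, Matrix.mul_assoc]
  have hM : Uᵀ * A₀⁻¹ * U = Λ⁻¹ * G * Λ⁻¹ := by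
    rw [hUt, hU, hGdef]
    simp only [Matrix.mul_assoc]
  have hC : 1 + Uᵀ * A₀⁻¹ * V = (1 / 2 : K) • (Λ⁻¹ * G * B) := by
    rw [hUt, hV]
    simp only [Matrix.mul_sub, Matrix.mul_smul, Matrix.mul_assoc, hGdef,
      nonsing_inv_mul_cancel_left _ _ hA₀u, hYS, nonsing_inv_mul _ hΛu]
    abel
  have hC' : 1 + Vᵀ * A₀⁻¹ * U = (1 / 2 : K) • (Bᵀ * G * Λ⁻¹) := by
    simpa only [transpose_add, transpose_one, transpose_mul, transpose_smul, transpose_transpose,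
      hA₀.inv.eq, hΛ.inv.eq, hGdef, Matrix.mul_assoc] using congrArg transpose hC
  have hD : Vᵀ * A₀⁻¹ * V = (1 / 4 : K) • (Bᵀ * G * B) - Λ := by
    rw [hV]
    simp only [transpose_sub, transpose_smul, transpose_mul, hA₀.eq, Matrix.sub_mul,
      Matrix.mul_sub, Matrix.smul_mul, Matrix.mul_smul, Matrix.mul_assoc,
      nonsing_inv_mul_cancel_left _ _ hA₀u, mul_nonsing_inv_cancel_left _ _ hA₀u, hYS, hSYX,
      hΛB, hSA₀S, hBΛ, hGdef]
    module
  refine ⟨?_, sub_mul_inv_mul_eq_neg_of_factored hΛu hG hM hC hC' hD⟩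
  rw [hM, det_mul, det_mul]
  exact ((isUnit_nonsing_inv_det _ hΛu).mul hG).mul (isUnit_nonsing_inv_det _ hΛu)

end SchurComplement

theorem stmt_15_general
    {n k : ℕ} (A A₀ : Matrix (Fin n) (Fin n) ℝ) (hA : A.PosDef) (hA₀ : A₀.PosDef)
    (S : Matrix (Fin n) (Fin k) ℝ) (hrank : S.rank = k)
    (W₀ : Matrix (Fin n) (Fin n) ℝ) (hW₀S : W₀ * S = A * S) :
    let Δ := A * S - A₀ * S
    let Λ := Sᵀ * W₀ * S
    let U := W₀ * S * Λ⁻¹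
    let V := (1 - (1 / 2 : ℝ) • (U * Sᵀ)) * Δ
    IsUnit (Uᵀ * A₀⁻¹ * U).det ∧
      Vᵀ * A₀⁻¹ * V
        - (1 + Vᵀ * A₀⁻¹ * U) * (Uᵀ * A₀⁻¹ * U)⁻¹ * (1 + Uᵀ * A₀⁻¹ * V) = -Λ := by
  have hS : Function.Injective S.mulVec :=
    S.mulVec_injective_of_rank_eq_card (by rw [hrank, Fintype.card_fin])
  have hAS : Function.Injective (A * S).mulVec := by
    rw [show (A * S).mulVec = A.mulVec ∘ S.mulVec from
      funext fun x => (mulVec_mulVec x A S).symm]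
    exact (mulVec_injective_iff_isUnit.mpr hA.isUnit).comp hS
  have hΛ : (Sᵀ * (A * S)).PosDef := by
    simpa only [Matrix.mul_assoc] using hA.transpose_mul_mul_same hS
  have hG : ((A * S)ᵀ * A₀⁻¹ * (A * S)).PosDef := hA₀.inv.transpose_mul_mul_same hAS
  have hΛW₀ : Sᵀ * W₀ * S = Sᵀ * (A * S) := by rw [Matrix.mul_assoc, hW₀S]
  simp only [hΛW₀, hW₀S]
  exact schur_complement_eq_neg A₀ S (A * S) hA₀.isSymm_s15 hA₀.isUnit_det hΛ.isSymm_s15 hΛ.isUnit_det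
    hG.isUnit_det

/-- The Schur complement of `UᵀA₀⁻¹U` in the block matrix arising from the
rank-2k form of the symmetric-Kronecker posterior mean equals `−Λ`. -/
theorem stmt_15
    {n k : ℕ} (A A₀ : Matrix (Fin n) (Fin n) ℝ) (hA : A.PosDef) (hA₀ : A₀.PosDef)
    (S : Matrix (Fin n) (Fin k) ℝ) (hrank : S.rank = k)
    (W₀ : Matrix (Fin n) (Fin n) ℝ) (hW₀ : W₀.IsSymm) (hW₀S : W₀ * S = A * S) :
    let Δ := A * S - A₀ * S
    let Λ := Sᵀ * W₀ * S
    let U := W₀ * S * Λ⁻¹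
    let V := (1 - (1 / 2 : ℝ) • (U * Sᵀ)) * Δ
    IsUnit (Uᵀ * A₀⁻¹ * U).det ∧
      Vᵀ * A₀⁻¹ * V
        - (1 + Vᵀ * A₀⁻¹ * U) * (Uᵀ * A₀⁻¹ * U)⁻¹ * (1 + Uᵀ * A₀⁻¹ * V) = -Λ :=
  stmt_15_general A A₀ hA hA₀ S hrank W₀ hW₀S
end

section
/- Let A be an n×n symmetric positive definite real matrix, A₀ an n×n symmetric positive definite matrix, S ∈ ℝ^{n×k} with SᵀAS = I, and W₀ a symmetric n×n matrix with W₀S = AS. Let A_k = A₀ + ΔUᵀ + UΔᵀ − USᵀΔUᵀ be the symmetric-Kronecker posterior mean, where Δ = AS − A₀S and U = W₀S(SᵀW₀S)⁻¹. Then A_k is invertible with A_k⁻¹ = A₀⁻¹ − A₀⁻¹AS (SᵀAA₀⁻¹AS)⁻¹ SᵀAA₀⁻¹ + SSᵀ. -/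
/-!
Put `C = A S`, so that `Sᵀ C = Cᵀ S = 1`. Then `W₀ S = C` forces `U = C`, and the posterior mean
factors as `A_k = P A₀ Pᵀ + C Cᵀ` with `P = 1 - C Sᵀ`, a projector satisfying `P C = 0`.
For `N = Cᵀ A₀⁻¹ C` and `B₀ = A₀⁻¹ - A₀⁻¹ C N⁻¹ Cᵀ A₀⁻¹` we have `Cᵀ B₀ = 0`, so the candidate
`B = B₀ + S Sᵀ` satisfies `Cᵀ B = Sᵀ` and `Pᵀ B = B₀`; moreover `A₀ B₀ = 1 - C N⁻¹ Cᵀ A₀⁻¹`,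
whose second term is killed by `P`. Hence `A_k B = P + C Sᵀ = 1`. Both `A₀` and `N` are
invertible because they are positive definite, `N` since `C` is injective.
-/

open Matrix

namespace Matrix

variable {m n R : Type*} [Fintype m] [Fintype n] [DecidableEq m] [DecidableEq n] [CommRing R]

lemma symmKroneckerUpdate_eq_conj_add_mul_transpose (A₀ : Matrix n n R) {C S : Matrix n m R}
    (hSC : Sᵀ * C = 1) :
    A₀ + (C - A₀ * S) * Cᵀ + C * (Cᵀ - Sᵀ * A₀) - C * Sᵀ * (C - A₀ * S) * Cᵀ
      = (1 - C * Sᵀ) * A₀ * (1 - S * Cᵀ) + C * Cᵀ := by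
  have hCC : C * (Sᵀ * (C * Cᵀ)) = C * Cᵀ := by rw [← Matrix.mul_assoc Sᵀ, hSC, Matrix.one_mul]
  simp only [Matrix.mul_sub, Matrix.sub_mul, Matrix.one_mul, Matrix.mul_one, Matrix.mul_assoc,
    hCC]
  abel

lemma conj_add_mul_transpose_mul_eq_one {A₀ : Matrix n n R} {C S : Matrix n m R}
    (hSC : Sᵀ * C = 1) (hCS : Cᵀ * S = 1) (hA₀ : IsUnit A₀.det)
    (hN : IsUnit (Cᵀ * A₀⁻¹ * C).det) :
    ((1 - C * Sᵀ) * A₀ * (1 - S * Cᵀ) + C * Cᵀ) *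
      (A₀⁻¹ - A₀⁻¹ * C * (Cᵀ * A₀⁻¹ * C)⁻¹ * Cᵀ * A₀⁻¹ + S * Sᵀ) = 1 := by
  set N := Cᵀ * A₀⁻¹ * C with hN_def
  set B₀ := A₀⁻¹ - A₀⁻¹ * C * N⁻¹ * Cᵀ * A₀⁻¹
  have hPC : (1 - C * Sᵀ) * C = 0 := by
    rw [Matrix.sub_mul, Matrix.one_mul, Matrix.mul_assoc, hSC, Matrix.mul_one, sub_self]
  have hCB₀ : Cᵀ * B₀ = 0 := by
    rw [Matrix.mul_sub, ← Matrix.mul_assoc, ← Matrix.mul_assoc, ← Matrix.mul_assoc,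
      ← Matrix.mul_assoc, ← hN_def, mul_nonsing_inv _ hN, Matrix.one_mul, sub_self]
  have hCB : Cᵀ * (B₀ + S * Sᵀ) = Sᵀ := by
    rw [Matrix.mul_add, hCB₀, ← Matrix.mul_assoc, hCS, Matrix.one_mul, zero_add]
  have hPB : (1 - S * Cᵀ) * (B₀ + S * Sᵀ) = B₀ := by
    rw [Matrix.sub_mul, Matrix.one_mul, Matrix.mul_assoc, hCB, add_sub_cancel_right]
  have hA₀B₀ : A₀ * B₀ = 1 - C * N⁻¹ * Cᵀ * A₀⁻¹ := by
    simp only [B₀, Matrix.mul_sub, ← Matrix.mul_assoc, mul_nonsing_inv _ hA₀, Matrix.one_mul]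
  calc ((1 - C * Sᵀ) * A₀ * (1 - S * Cᵀ) + C * Cᵀ) * (B₀ + S * Sᵀ)
      = (1 - C * Sᵀ) * (A₀ * B₀) + C * Sᵀ := by
        rw [Matrix.add_mul, Matrix.mul_assoc _ (1 - S * Cᵀ), hPB, Matrix.mul_assoc C, hCB,
          Matrix.mul_assoc]
    _ = 1 := by
        rw [hA₀B₀, Matrix.mul_sub, Matrix.mul_one, ← Matrix.mul_assoc (1 - C * Sᵀ),
          ← Matrix.mul_assoc (1 - C * Sᵀ), ← Matrix.mul_assoc (1 - C * Sᵀ), hPC]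
        rw [Matrix.zero_mul, Matrix.zero_mul, Matrix.zero_mul, sub_zero, sub_add_cancel]

end Matrix

theorem stmt_16_general
    {n k : ℕ} (A A₀ : Matrix (Fin n) (Fin n) ℝ) (hA : A.PosDef) (hA₀ : A₀.PosDef)
    (S : Matrix (Fin n) (Fin k) ℝ) (hSAS : Sᵀ * A * S = 1)
    (W₀ : Matrix (Fin n) (Fin n) ℝ) (hW₀S : W₀ * S = A * S) :
    let Δ := A * S - A₀ * S
    let U := W₀ * S * (Sᵀ * W₀ * S)⁻¹
    let Ak := A₀ + Δ * Uᵀ + U * Δᵀ - U * Sᵀ * Δ * Uᵀ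
    IsUnit Ak.det ∧
      Ak⁻¹ = A₀⁻¹ - A₀⁻¹ * A * S * (Sᵀ * A * A₀⁻¹ * A * S)⁻¹ * Sᵀ * A * A₀⁻¹
        + S * Sᵀ := by
  intro Δ U Ak
  set C := A * S with hC
  have hCt : Cᵀ = Sᵀ * A := by
    rw [transpose_mul, (isHermitian_iff_isSymm.mp hA.isHermitian).eq]
  have hSC : Sᵀ * C = 1 := by rw [← Matrix.mul_assoc, hSAS]
  have hCS : Cᵀ * S = 1 := by rw [hCt, hSAS]
  have hU : U = C := by
    rw [show U = W₀ * S * (Sᵀ * W₀ * S)⁻¹ from rfl, Matrix.mul_assoc Sᵀ, hW₀S, hSC, inv_one,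
      Matrix.mul_one]
  have hΔt : Δᵀ = Cᵀ - Sᵀ * A₀ := by
    rw [transpose_sub, transpose_mul, transpose_mul,
      (isHermitian_iff_isSymm.mp hA₀.isHermitian).eq]
  have hAk : Ak = (1 - C * Sᵀ) * A₀ * (1 - S * Cᵀ) + C * Cᵀ := by
    rw [show Ak = A₀ + Δ * Uᵀ + U * Δᵀ - U * Sᵀ * Δ * Uᵀ from rfl, hΔt, hU]
    exact symmKroneckerUpdate_eq_conj_add_mul_transpose A₀ hSC
  have hN : (Cᵀ * A₀⁻¹ * C).PosDef := by
    rw [← conjTranspose_eq_transpose_of_trivial]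
    refine hA₀.inv.conjTranspose_mul_mul_same fun x y hxy => ?_
    simpa only [mulVec_mulVec, hSC, one_mulVec] using congrArg (Sᵀ *ᵥ ·) hxy
  have hinv := conj_add_mul_transpose_mul_eq_one hSC hCS
    ((isUnit_iff_isUnit_det _).mp hA₀.isUnit) ((isUnit_iff_isUnit_det _).mp hN.isUnit)
  have hRHS : A₀⁻¹ - A₀⁻¹ * A * S * (Sᵀ * A * A₀⁻¹ * A * S)⁻¹ * Sᵀ * A * A₀⁻¹ + S * Sᵀ
      = A₀⁻¹ - A₀⁻¹ * C * (Cᵀ * A₀⁻¹ * C)⁻¹ * Cᵀ * A₀⁻¹ + S * Sᵀ := by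
    rw [hCt, hC]
    simp only [Matrix.mul_assoc]
  rw [hRHS, hAk]
  exact ⟨isUnit_det_of_right_inverse hinv, inv_eq_right_inv hinv⟩

/-- Closed form of the inverse of the symmetric-Kronecker posterior mean under
the normalization `SᵀAS = I`. -/
theorem stmt_16
    {n k : ℕ} (A A₀ : Matrix (Fin n) (Fin n) ℝ) (hA : A.PosDef) (hA₀ : A₀.PosDef)
    (S : Matrix (Fin n) (Fin k) ℝ) (hSAS : Sᵀ * A * S = 1)
    (W₀ : Matrix (Fin n) (Fin n) ℝ) (hW₀ : W₀.IsSymm) (hW₀S : W₀ * S = A * S) :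
    let Δ := A * S - A₀ * S
    let U := W₀ * S * (Sᵀ * W₀ * S)⁻¹
    let Ak := A₀ + Δ * Uᵀ + U * Δᵀ - U * Sᵀ * Δ * Uᵀ
    IsUnit Ak.det ∧
      Ak⁻¹ = A₀⁻¹ - A₀⁻¹ * A * S * (Sᵀ * A * A₀⁻¹ * A * S)⁻¹ * Sᵀ * A * A₀⁻¹
        + S * Sᵀ :=
  stmt_16_general A A₀ hA hA₀ S hSAS W₀ hW₀S
end
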